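/- arXiv:2507.00781 — 12 statements merged into one kernel-verified Lean document; each statement's English description precedes it below -/
import Mathlib

section
/- Let q be a prime power, n a positive integer, H a function from F_{q^n} to F_{q^n}, and γ ∈ F_{q^n}. Then x ↦ x + γ·Tr(H(x)) is a bijection of F_{q^n} if and only if γ is not of the form (y−x)/(b−c) for any x, y ∈ F_{q^n} with Tr(H(x)) = b, Tr(H(y)) = c and b ≠ c. -/
/-- The trace-like map `x ↦ ∑_{i<n} x^(q^i)` from `F_{q^n}` to `F_q`. -/
def fieldTrace (q n : ℕ) {F : Type*} [Field F] (x : F) : F :=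
  ∑ i ∈ Finset.range n, x ^ q ^ i

theorem stmt_0 (p m n : ℕ) (hp : p.Prime) (hm : 0 < m) (hn : 0 < n)
    (F : Type*) [Field F] [Fintype F] (hF : Fintype.card F = (p ^ m) ^ n)
    (H : F → F) (γ : F) :
    Function.Bijective (fun x : F => x + γ * fieldTrace (p ^ m) n (H x)) ↔
      ¬ ∃ x y : F, fieldTrace (p ^ m) n (H x) ≠ fieldTrace (p ^ m) n (H y) ∧
        γ = (y - x) / (fieldTrace (p ^ m) n (H x) - fieldTrace (p ^ m) n (H y)) := by
  set T : F → F := fun x => fieldTrace (p ^ m) n (H x) with hT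
  constructor
  · rintro hbij ⟨x, y, hne, hγ⟩
    have hd : T x - T y ≠ 0 := sub_ne_zero.mpr hne
    have hxy : x ≠ y := fun h => hne (by rw [h])
    apply hxy
    apply hbij.injective
    show x + γ * T x = y + γ * T y
    have h1 : γ * (T x - T y) = y - x := by
      rw [hγ, div_mul_cancel₀ _ hd]
    linear_combination h1
  · intro h
    rw [← Finite.injective_iff_bijective]
    intro x y hxy
    have hxy' : x + γ * T x = y + γ * T y := hxy
    by_cases he : T x = T y
    · rw [he] at hxy'; exact add_right_cancel hxy'
    · exfalso
      apply h
      refine ⟨x, y, he, ?_⟩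
      have hd : T x - T y ≠ 0 := sub_ne_zero.mpr he
      rw [eq_div_iff hd]
      linear_combination hxy'
end

section
/- Let H be a function from F_{q^n} to F_{q^n}. The set P_H = {γ ∈ F_{q^n} : x + γ·Tr(H(x)) permutes F_{q^n}} equals all of F_{q^n} if and only if the map x ↦ Tr(H(x)) is constant on F_{q^n}. -/
/-! If `T x ≠ T 0`, the choice `γ = x / (T 0 - T x)` makes `y ↦ y + γ * T y` send `x` and `0`
to the same point; if `T` is constant, every such map is a translation. -/

open Function

section DivisionRing

variable {K : Type*} [DivisionRing K]

theorem exists_const_of_forall_injective_add_mul {T : K → K}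
    (h : ∀ γ : K, Injective fun x => x + γ * T x) : ∃ c, ∀ x, T x = c := by
  refine ⟨T 0, fun x => by_contra fun hne => hne ?_⟩
  have hsub : T 0 - T x ≠ 0 := sub_ne_zero.mpr (Ne.symm hne)
  set γ := x / (T 0 - T x)
  have hx : γ * T 0 - γ * T x = x := by rw [← mul_sub]; exact div_mul_cancel₀ x hsub
  have hcollide : x + γ * T x = 0 + γ * T 0 := by
    rw [zero_add]; nth_rewrite 1 [← hx]; exact sub_add_cancel _ _
  rw [h γ hcollide]

theorem forall_bijective_add_mul_iff (T : K → K) :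
    (∀ γ : K, Bijective fun x => x + γ * T x) ↔ ∃ c, ∀ x, T x = c := by
  refine ⟨fun h => exists_const_of_forall_injective_add_mul fun γ => (h γ).injective, ?_⟩
  rintro ⟨c, hc⟩ γ
  simp only [hc]
  exact (Equiv.addRight (γ * c)).bijective

end DivisionRing

theorem stmt_1_general (p m n : ℕ)
    (F : Type*) [Field F]
    (H : F → F) :
    (∀ γ : F, Function.Bijective (fun x : F => x + γ * fieldTrace (p ^ m) n (H x))) ↔
      ∃ c : F, ∀ x : F, fieldTrace (p ^ m) n (H x) = c :=
  forall_bijective_add_mul_iff _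

theorem stmt_1 (p m n : ℕ) (hp : p.Prime) (hm : 0 < m) (hn : 0 < n)
    (F : Type*) [Field F] [Fintype F] (hF : Fintype.card F = (p ^ m) ^ n)
    (H : F → F) :
    (∀ γ : F, Function.Bijective (fun x : F => x + γ * fieldTrace (p ^ m) n (H x))) ↔
      ∃ c : F, ∀ x : F, fieldTrace (p ^ m) n (H x) = c :=
  stmt_1_general p m n F H
end

section
/- Let p be a prime, q = p^m, and suppose H(x) ∈ F_{p^t}[x] is a polynomial with coefficients in the subfield F_{p^t} of F_{q^n}. If α ∈ F_{q^n} is such that x + α·Tr(H(x)) is not a permutation of F_{q^n}, then x + α^{p^t}·Tr(H(x)) is also not a permutation of F_{q^n}. -/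
theorem stmt_2 (p m n t : ℕ) (hp : p.Prime) (hm : 0 < m) (hn : 0 < n) (ht : 0 < t)
    (htdvd : t ∣ m * n)
    (F : Type*) [Field F] [Fintype F] (hF : Fintype.card F = (p ^ m) ^ n)
    (H : Polynomial F) (hH : ∀ i, H.coeff i ^ p ^ t = H.coeff i)
    (α : F)
    (hα : ¬ Function.Bijective
      (fun x : F => x + α * fieldTrace (p ^ m) n (H.eval x))) :
    ¬ Function.Bijective
      (fun x : F => x + α ^ p ^ t * fieldTrace (p ^ m) n (H.eval x)) := by
  intro hg
  apply hα
  haveI : Fact p.Prime := ⟨hp⟩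
  -- char F = p
  obtain ⟨r, hr⟩ := CharP.exists F
  haveI := hr
  have hrprime : r.Prime := CharP.char_is_prime F r
  obtain ⟨k, hk⟩ := FiniteField.card F r
  have hcard : r ^ (k : ℕ) = p ^ (m * n) := by
    rw [← hk.2, hF, pow_mul]
  have hrp : r = p := by
    have hdvd : r ∣ p ^ (m * n) := by
      rw [← hcard]
      exact dvd_pow_self r k.pos.ne'
    exact ((Nat.prime_dvd_prime_iff_eq hrprime hp).mp
      (hrprime.dvd_of_dvd_pow hdvd))
  subst hrp
  -- the Frobenius map
  set φ : F →+* F := iterateFrobenius F r t with hφdef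
  have hφ : ∀ x : F, φ x = x ^ r ^ t := fun x => rfl
  have hφbij : Function.Bijective φ := φ.injective.bijective_of_finite
  -- key commutation
  have hcomm : ∀ x : F,
      φ (x + α * fieldTrace (r ^ m) n (H.eval x))
      = φ x + α ^ r ^ t * fieldTrace (r ^ m) n (H.eval (φ x)) := by
    intro x
    have hHeval : H.eval x ^ r ^ t = H.eval (x ^ r ^ t) := by
      rw [Polynomial.eval_eq_sum_range, Polynomial.eval_eq_sum_range, ← hφ, map_sum]
      refine Finset.sum_congr rfl fun i _ => ?_
      rw [map_mul, hφ, hφ, hH i, ← pow_mul, mul_comm i, pow_mul]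
    have htr : fieldTrace (r ^ m) n (H.eval x) ^ r ^ t
        = fieldTrace (r ^ m) n (H.eval (x ^ r ^ t)) := by
      unfold fieldTrace
      rw [← hφ, map_sum]
      refine Finset.sum_congr rfl fun i _ => ?_
      rw [hφ, ← pow_mul, mul_comm, pow_mul, hHeval]
    rw [map_add, map_mul, hφ α, hφ x, ← htr, hφ]
  -- conclude
  have : (φ ∘ fun x : F => x + α * fieldTrace (r ^ m) n (H.eval x))
      = (fun x : F => x + α ^ r ^ t * fieldTrace (r ^ m) n (H.eval x)) ∘ φ := by
    funext x
    exact hcomm x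
  have hbij : Function.Bijective
      (φ ∘ fun x : F => x + α * fieldTrace (r ^ m) n (H.eval x)) := by
    rw [this]
    exact hg.comp hφbij
  exact (Function.Bijective.of_comp_iff' hφbij _).mp hbij
end

section
/- Let f : F_{q^n} → F_q be given by f(x) = Tr(H(x)) for some function H, and let α ∈ F_{q^n} be nonzero. Then the line αF_q = {αu : u ∈ F_q} is contained in P_H if and only if α is a 0-linear translator of f, i.e. f(x + uα) = f(x) for all x ∈ F_{q^n} and all u ∈ F_q. -/
/-!
If `f` takes values in a subfield `K` and `u ∈ K`, then `x` and `x + uα` collide under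
`x ↦ x + αv f(x)` for `v = -u / (f(x + uα) - f(x)) ∈ K`; so all these maps are injective
precisely when `f` is constant along `K α`. The trace `Tr(H x)` lies in the subfield `F_q` of
fixed points of `x ↦ x^q`, and over a finite field injective means bijective.
-/

section LinearTranslator

variable {F : Type*} [Field F] (K : Subfield F) {f : F → F}

theorem injective_add_mul_of_translator (hf : ∀ x, f x ∈ K) {α : F}
    (htr : ∀ x, ∀ u ∈ K, f (x + u * α) = f x) {u : F} (hu : u ∈ K) :
    Function.Injective fun x => x + (α * u) * f x := by
  intro x y hxy
  have hc : u * (f y - f x) ∈ K := K.mul_mem hu (K.sub_mem (hf y) (hf x))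
  have hx : x = y + u * (f y - f x) * α := by linear_combination hxy
  have hfx : f x = f y := by rw [hx]; exact htr y _ hc
  simp only [hfx] at hxy
  exact add_right_cancel hxy

theorem translator_of_injective_add_mul (hf : ∀ x, f x ∈ K) {α : F}
    (hinj : ∀ u ∈ K, Function.Injective fun x => x + (α * u) * f x) :
    ∀ x, ∀ u ∈ K, f (x + u * α) = f x := by
  intro x u hu
  by_contra hne
  have hδ : f (x + u * α) - f x ≠ 0 := sub_ne_zero.mpr hne
  set v := -(u / (f (x + u * α) - f x))
  have hv : v ∈ K := K.neg_mem (K.div_mem hu (K.sub_mem (hf _) (hf x)))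
  have hcollide : (x + u * α) + (α * v) * f (x + u * α) = x + (α * v) * f x := by
    simp only [v]
    field_simp
    ring
  have huα : u * α = 0 := add_eq_left.mp (hinj v hv hcollide)
  simp [huα] at hne

theorem bijective_add_mul_iff_translator [Finite F] (hf : ∀ x, f x ∈ K) (α : F) :
    (∀ u ∈ K, Function.Bijective fun x => x + (α * u) * f x) ↔
      ∀ x, ∀ u ∈ K, f (x + u * α) = f x := by
  simp only [← Finite.injective_iff_bijective]
  exact ⟨translator_of_injective_add_mul K hf, fun htr _ hu =>
    injective_add_mul_of_translator K hf htr hu⟩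

end LinearTranslator

theorem fieldTrace_pow_eq_self {F : Type*} [Field F] (p m n : ℕ) [ExpChar F p] {y : F}
    (hy : y ^ (p ^ m) ^ n = y) :
    fieldTrace (p ^ m) n y ^ p ^ m = fieldTrace (p ^ m) n y := by
  have hshift : fieldTrace (p ^ m) n y ^ p ^ m = ∑ i ∈ Finset.range n, y ^ (p ^ m) ^ (i + 1) := by
    rw [fieldTrace, sum_pow_char_pow]
    exact Finset.sum_congr rfl fun i _ => by rw [← pow_mul, ← pow_succ]
  have htelescope := (Finset.sum_range_succ' (fun i => y ^ (p ^ m) ^ i) n).symm.trans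
    (Finset.sum_range_succ _ n)
  rw [hy, pow_zero, pow_one] at htelescope
  rw [hshift, fieldTrace]
  exact add_right_cancel htelescope

theorem stmt_3_general (p m n : ℕ) (hp : p.Prime)
    (F : Type*) [Field F] [Fintype F] (hF : Fintype.card F = (p ^ m) ^ n)
    (H : F → F) (α : F) :
    (∀ u : F, u ^ p ^ m = u →
        Function.Bijective (fun x : F => x + (α * u) * fieldTrace (p ^ m) n (H x))) ↔
      (∀ x u : F, u ^ p ^ m = u →
        fieldTrace (p ^ m) n (H (x + u * α)) = fieldTrace (p ^ m) n (H x)) := by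
  have : Fact p.Prime := ⟨hp⟩
  have : CharP F p := charP_of_card_eq_prime_pow (by rw [hF, ← pow_mul])
  have htrace : ∀ x, fieldTrace (p ^ m) n (H x) ∈
      (iterateFrobenius F p m).eqLocusField (RingHom.id F) := fun x =>
    fieldTrace_pow_eq_self p m n (by rw [← hF, FiniteField.pow_card])
  exact bijective_add_mul_iff_translator _ htrace α

theorem stmt_3 (p m n : ℕ) (hp : p.Prime) (hm : 0 < m) (hn : 0 < n)
    (F : Type*) [Field F] [Fintype F] (hF : Fintype.card F = (p ^ m) ^ n)
    (H : F → F) (α : F) (hα : α ≠ 0) :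
    (∀ u : F, u ^ p ^ m = u →
        Function.Bijective (fun x : F => x + (α * u) * fieldTrace (p ^ m) n (H x))) ↔
      (∀ x u : F, u ^ p ^ m = u →
        fieldTrace (p ^ m) n (H (x + u * α)) = fieldTrace (p ^ m) n (H x)) :=
  stmt_3_general p m n hp F hF H α
end

section
/- Suppose α ∈ F_{q^n} is a b-linear translator of f(x) = Tr(H(x)) with b ≠ 0, and suppose the line αF_q is uniformly distributed over the level sets I_0, ..., I_{q−1} of f (i.e., each |αF_q ∩ I_c| = 1). Then for every γ ∈ αF_q with γ ≠ −αb^{−1}, the map u ↦ αu + γ·f(αu) is injective on F_q. -/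
theorem stmt_4 (p m n : ℕ) (hp : p.Prime) (hm : 0 < m) (hn : 0 < n)
    (F : Type*) [Field F] [Fintype F] (hF : Fintype.card F = (p ^ m) ^ n)
    (H : F → F) (α b : F) (hα : α ≠ 0) (hb : b ≠ 0) (hbq : b ^ p ^ m = b)
    (htrans : ∀ x u : F, u ^ p ^ m = u →
      fieldTrace (p ^ m) n (H (x + u * α)) = fieldTrace (p ^ m) n (H x) + u * b)
    (huniform : ∀ c : F, c ^ p ^ m = c →
      ∃! u : F, u ^ p ^ m = u ∧ fieldTrace (p ^ m) n (H (α * u)) = c)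
    (γ : F) (hγ : ∃ s : F, s ^ p ^ m = s ∧ γ = α * s) (hγne : γ ≠ -α * b⁻¹) :
    ∀ u v : F, u ^ p ^ m = u → v ^ p ^ m = v →
      α * u + γ * fieldTrace (p ^ m) n (H (α * u)) =
        α * v + γ * fieldTrace (p ^ m) n (H (α * v)) → u = v := by
  obtain ⟨s, hs, rfl⟩ := hγ
  have hsb : 1 + s * b ≠ 0 := by
    intro h
    apply hγne
    have hseq : s = -b⁻¹ := by
      field_simp
      linear_combination h
    rw [hseq]; field_simp
  intro u v hu hv heq
  have h0u := htrans 0 u hu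
  have h0v := htrans 0 v hv
  rw [zero_add, mul_comm] at h0u h0v
  rw [h0u, h0v] at heq
  have key : α * (1 + s * b) * (u - v) = 0 := by ring_nf; linear_combination heq
  rcases mul_eq_zero.mp key with h | h
  · exact absurd (mul_eq_zero.mp h) (by push_neg; exact ⟨hα, hsb⟩)
  · exact sub_eq_zero.mp h
end

section
/- Let q be an odd prime power. The polynomial f(x) = x + γ·Tr(x²) over F_{q²} (where Tr(x) = x + x^q) is a permutation of F_{q²} if and only if γ = 0. -/
/-!
If `γ ≠ 0`, take `x - y = -γ` with `x ^ 2 - y ^ 2 = 1 / 2`. Since `1 / 2` lies in the prime field,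
its image under `z ↦ z + z ^ q` is `1`, so the two terms of `f x - f y = -γ + γ (Tr x² - Tr y²)`
cancel and `f` is not injective.
-/

open Function

theorem inv_two_pow_expChar_pow {F : Type*} [Field F] (p n : ℕ) [ExpChar F p] :
    (2⁻¹ : F) ^ p ^ n = 2⁻¹ := by
  rw [inv_pow, ← iterateFrobenius_def, map_ofNat]

theorem not_injective_add_mul_sq_add_sq_pow_expChar_pow {F : Type*} [Field F] (p n : ℕ)
    [ExpChar F p] (h2 : (2 : F) ≠ 0) {γ : F} (hγ : γ ≠ 0) :
    ¬Injective (fun x : F => x + γ * (x ^ 2 + (x ^ 2) ^ p ^ n)) := by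
  intro hinj
  set y : F := (γ ^ 2 - 2⁻¹) / (2 * γ)
  have hsq : (y - γ) ^ 2 = y ^ 2 + 2⁻¹ := by
    simp only [y]
    field_simp
    ring
  have hsq_pow : ((y - γ) ^ 2) ^ p ^ n = (y ^ 2) ^ p ^ n + 2⁻¹ := by
    rw [hsq, add_pow_expChar_pow, inv_two_pow_expChar_pow]
  have hcollide : y - γ + γ * ((y - γ) ^ 2 + ((y - γ) ^ 2) ^ p ^ n)
      = y + γ * (y ^ 2 + (y ^ 2) ^ p ^ n) := by
    rw [hsq_pow, hsq]
    linear_combination γ * mul_inv_cancel₀ h2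
  exact hγ (sub_eq_self.mp (hinj hcollide))

theorem stmt_12_general (p m : ℕ) (hp : p.Prime) (hp2 : p ≠ 2)
    (F : Type*) [Field F] [Fintype F] (hF : Fintype.card F = (p ^ m) ^ 2)
    (γ : F) :
    Function.Bijective (fun x : F => x + γ * (x ^ 2 + (x ^ 2) ^ p ^ m)) ↔ γ = 0 := by
  constructor
  · intro hbij
    by_contra hγ
    have : Fact p.Prime := ⟨hp⟩
    have : CharP F p := charP_of_card_eq_prime_pow (hF.trans (pow_mul p m 2).symm)
    have : ExpChar F p := ExpChar.prime hp
    have h2 : (2 : F) ≠ 0 := Ring.two_ne_zero ((ringChar.eq F p).trans_ne hp2)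
    exact not_injective_add_mul_sq_add_sq_pow_expChar_pow p m h2 hγ hbij.injective
  · rintro rfl
    simp

theorem stmt_12 (p m : ℕ) (hp : p.Prime) (hp2 : p ≠ 2) (hm : 0 < m)
    (F : Type*) [Field F] [Fintype F] (hF : Fintype.card F = (p ^ m) ^ 2)
    (γ : F) :
    Function.Bijective (fun x : F => x + γ * (x ^ 2 + (x ^ 2) ^ p ^ m)) ↔ γ = 0 :=
  stmt_12_general p m hp hp2 F hF γ
end

section
/- Let q be an odd prime power. The polynomial f(x) = x + γ·Tr(x^{q+1}) over F_{q²} is a permutation of F_{q²} if and only if γ = 0. -/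
theorem stmt_13 (p m : ℕ) (hp : p.Prime) (hp2 : p ≠ 2) (hm : 0 < m)
    (F : Type*) [Field F] [Fintype F] (hF : Fintype.card F = (p ^ m) ^ 2)
    (γ : F) :
    Function.Bijective
        (fun x : F => x + γ * (x ^ (p ^ m + 1) + (x ^ (p ^ m + 1)) ^ p ^ m)) ↔
      γ = 0 := by
  constructor
  · intro hbij
    by_contra hγ
    -- characteristic is p
    have hrc : CharP F (ringChar F) := ringChar.charP F
    obtain ⟨n, hrp, hcard⟩ := FiniteField.card F (ringChar F)
    have hrP : ringChar F = p := by
      have hdvd : ringChar F ∣ p ^ (m * 2) := by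
        rw [pow_mul, ← hF, hcard]
        exact dvd_pow_self _ n.ne_zero
      have := hrp.dvd_of_dvd_pow (n := m * 2) hdvd
      exact (Nat.prime_dvd_prime_iff_eq hrp hp).mp this
    have hchar : CharP F p := hrP ▸ hrc
    have h2 : (2 : F) ≠ 0 := by
      intro h
      have : (p : ℕ) ∣ 2 := by
        have := (CharP.cast_eq_zero_iff F p 2).mp (by exact_mod_cast h)
        exact this
      exact hp2 ((Nat.prime_dvd_prime_iff_eq hp Nat.prime_two).mp this)
    have h2γ : 2 * γ ≠ 0 := mul_ne_zero h2 hγ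
    set q := p ^ m with hq
    set a : F := -(2 * γ)⁻¹ with ha
    have ha0 : a ≠ 0 := neg_ne_zero.mpr (inv_ne_zero h2γ)
    set x : F := a ^ q with hx
    have hx0 : x ≠ 0 := pow_ne_zero _ ha0
    have hxq : x ^ q = a := by
      rw [hx, ← pow_mul, ← sq, ← hF, FiniteField.pow_card]
    have h1 : x ^ (q + 1) = a * x := by rw [pow_succ, hxq, mul_comm]
    have h2' : (x ^ (q + 1)) ^ q = a * x := by
      rw [h1, mul_pow, hxq, hx, mul_comm]
    have hga : 2 * γ * a = -1 := by
      rw [ha]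
      field_simp
    have key : x + γ * (x ^ (q + 1) + (x ^ (q + 1)) ^ q) = 0 := by
      rw [h2', h1]
      have : x + γ * (a * x + a * x) = x + (2 * γ * a) * x := by ring
      rw [this, hga]; ring
    have h0 : (0 : F) + γ * ((0 : F) ^ (q + 1) + ((0 : F) ^ (q + 1)) ^ q) = 0 := by
      have hq0 : q ≠ 0 := pow_ne_zero m hp.pos.ne'
      rw [zero_pow (Nat.succ_ne_zero q), zero_pow hq0]; simp
    have := hbij.injective (a₁ := x) (a₂ := 0) (by simp only [key, h0])
    exact hx0 this
  · rintro rfl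
    simpa using Function.bijective_id
end

section
/- Let q be an odd prime power with q ≡ 1 (mod 4). The polynomial f(x) = x + γ·Tr(x^{q+3}) over F_{q²} is a permutation of F_{q²} if and only if γ = 0. -/
theorem stmt_14 (p m : ℕ) (hp : p.Prime) (hp2 : p ≠ 2) (hm : 0 < m)
    (h4 : p ^ m % 4 = 1)
    (F : Type*) [Field F] [Fintype F] (hF : Fintype.card F = (p ^ m) ^ 2)
    (γ : F) :
    Function.Bijective
        (fun x : F => x + γ * (x ^ (p ^ m + 3) + (x ^ (p ^ m + 3)) ^ p ^ m)) ↔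
      γ = 0 := by
  classical
  haveI : Fact p.Prime := ⟨hp⟩
  set q : ℕ := p ^ m with hqdef
  constructor
  · intro hbij
    by_contra hγ
    -- numerology
    have hp3 : 3 ≤ p := by have := hp.two_le; omega
    have hq3 : 3 ≤ q := le_trans hp3 (Nat.le_self_pow hm.ne' p)
    have hq5 : 5 ≤ q := by omega
    have hqodd : Odd q := (hp.odd_of_ne_two hp2).pow
    -- characteristic
    have hchar : CharP F p := by
      haveI h1 := ringChar.charP F
      obtain ⟨n, hrp, hn⟩ := FiniteField.card F (ringChar F)
      have hdvd : p ∣ ringChar F ^ (n : ℕ) := by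
        rw [← hn, hF, hqdef, ← pow_mul]
        exact dvd_pow_self p (by positivity)
      have : p = ringChar F :=
        (Nat.prime_dvd_prime_iff_eq hp hrp).mp (hp.dvd_of_dvd_pow hdvd)
      rwa [this]
    haveI := hchar
    have frobq : ∀ x y : F, (x + y) ^ q = x ^ q + y ^ q := fun x y =>
      add_pow_char_pow x y p m
    have hq0F : (q : F) = 0 := by
      rw [hqdef]
      push_cast
      rw [CharP.cast_eq_zero F p, zero_pow hm.ne']
    have hpow : ∀ x : F, x ^ q ^ 2 = x := by
      intro x
      rw [← hF]
      exact FiniteField.pow_card x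
    have hpowq : ∀ x : F, (x ^ q) ^ q = x := by
      intro x
      rw [← pow_mul, ← pow_two]
      exact hpow x
    -- cyclic structure
    have hcardu : Fintype.card Fˣ = q ^ 2 - 1 := by rw [Fintype.card_units, hF]
    obtain ⟨g, hg⟩ := IsCyclic.exists_generator (α := Fˣ)
    have horderg : orderOf g = q ^ 2 - 1 := by
      rw [orderOf_eq_card_of_forall_mem_zpowers hg, Nat.card_eq_fintype_card, hcardu]
    set h : Fˣ := g ^ (q + 1) with hhdef
    have hfac : (q + 1) * (q - 1) = q ^ 2 - 1 := by
      simpa using (Nat.sq_sub_sq q 1).symm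
    have horderh : orderOf h = q - 1 := by
      rw [hhdef, orderOf_pow, horderg, Nat.gcd_eq_right ⟨q - 1, hfac.symm⟩, ← hfac,
        Nat.mul_div_cancel_left _ (by omega)]
    have hh1u : h ^ (q - 1) = 1 := by rw [← horderh]; exact pow_orderOf_eq_one h
    have hh1 : (↑h : F) ^ (q - 1) = 1 := by
      rw [← Units.val_pow_eq_pow_val, hh1u, Units.val_one]
    have hhne : ∀ i : ℕ, 0 < i → i < q - 1 → (↑h : F) ^ i ≠ 1 := by
      intro i hi0 hi1 hcon
      have : h ^ i = 1 := Units.ext (by rw [Units.val_pow_eq_pow_val, hcon, Units.val_one])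
      have := Nat.le_of_dvd hi0 (horderh ▸ orderOf_dvd_of_pow_eq_one this)
      omega
    set E : Finset F := insert 0 ((Finset.range (q - 1)).image fun j => (↑h : F) ^ j)
      with hEdef
    have hinj_pow : ∀ i ∈ Finset.range (q - 1), ∀ j ∈ Finset.range (q - 1),
        (↑h : F) ^ i = (↑h : F) ^ j → i = j := by
      have key : ∀ i j : ℕ, i ≤ j → j < q - 1 → (↑h : F) ^ i = (↑h : F) ^ j → i = j := by
        intro i j hij hj hcon
        by_contra hne
        have h2 : (↑h : F) ^ i * (↑h : F) ^ (j - i) = (↑h : F) ^ i * 1 := by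
          rw [← pow_add, mul_one, Nat.add_sub_cancel' hij, hcon]
        have h3 : (↑h : F) ^ (j - i) = 1 :=
          mul_left_cancel₀ (pow_ne_zero i (Units.ne_zero h)) h2
        exact hhne (j - i) (by omega) (by omega) h3
      intro i hi j hj hcon
      simp only [Finset.mem_range] at hi hj
      rcases le_total i j with hle | hle
      · exact key i j hle hj hcon
      · exact (key j i hle hi hcon.symm).symm
    have h0notmem : (0 : F) ∉ (Finset.range (q - 1)).image fun j => (↑h : F) ^ j := by
      simp only [Finset.mem_image]
      rintro ⟨j, -, hj⟩
      exact pow_ne_zero j (Units.ne_zero h) hj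
    -- membership characterization
    have hq' : (↑h : F) ^ q = ↑h := by
      have h1 : q = (q - 1) + 1 := by omega
      rw [h1, pow_succ, hh1, one_mul]
    have hmemE : ∀ x : F, x ∈ E ↔ x ^ q = x := by
      intro x
      constructor
      · intro hx
        rcases Finset.mem_insert.mp hx with rfl | hx
        · exact zero_pow (by omega)
        · obtain ⟨j, -, rfl⟩ := Finset.mem_image.mp hx
          rw [← pow_mul, Nat.mul_comm, pow_mul, hq']
      · intro hx
        rcases eq_or_ne x 0 with rfl | hx0
        · exact Finset.mem_insert_self _ _
        · have hx1 : x ^ (q - 1) = 1 := by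
            have h2 : x ^ (q - 1) * x = 1 * x := by
              rw [one_mul, ← pow_succ]
              have h3 : q - 1 + 1 = q := by omega
              rw [h3, hx]
            exact mul_right_cancel₀ hx0 h2
          set u : Fˣ := Units.mk0 x hx0 with hudef
          have hu1 : u ^ (q - 1) = 1 := Units.ext (by
            rw [Units.val_pow_eq_pow_val, Units.val_one]
            exact hx1)
          obtain ⟨k, hk⟩ := Subgroup.mem_zpowers_iff.mp (hg u)
          have h3 : g ^ (k * ((q - 1 : ℕ) : ℤ)) = 1 := by
            rw [zpow_mul, hk, zpow_natCast, hu1]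
          have hdvd : ((q ^ 2 - 1 : ℕ) : ℤ) ∣ k * ((q - 1 : ℕ) : ℤ) := by
            rw [← horderg]
            exact orderOf_dvd_iff_zpow_eq_one.mpr h3
          have hfacZ : ((q ^ 2 - 1 : ℕ) : ℤ) = ((q + 1 : ℕ) : ℤ) * ((q - 1 : ℕ) : ℤ) := by
            rw [← hfac, Nat.cast_mul]
          rw [hfacZ] at hdvd
          have hdvd2 : ((q + 1 : ℕ) : ℤ) ∣ k :=
            (mul_dvd_mul_iff_right (by exact_mod_cast (by omega : (q - 1 : ℕ) ≠ 0) :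
              ((q - 1 : ℕ) : ℤ) ≠ 0)).mp hdvd
          obtain ⟨t, ht⟩ := hdvd2
          have hut : u = h ^ t := by
            rw [← hk, ht, zpow_mul, zpow_natCast]
          set r : ℤ := t % ((q - 1 : ℕ) : ℤ) with hrdef
          have hr0 : 0 ≤ r := Int.emod_nonneg t (by exact_mod_cast (by omega : (q - 1 : ℕ) ≠ 0))
          have hrlt : r < ((q - 1 : ℕ) : ℤ) :=
            Int.emod_lt_of_pos t (by exact_mod_cast (by omega : 0 < (q - 1 : ℕ)))
          have hur : u = h ^ (r.toNat) := by
            rw [hut, ← zpow_natCast h r.toNat, Int.toNat_of_nonneg hr0, hrdef, ← horderh,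
              zpow_mod_orderOf]
          have hxr : x = (↑h : F) ^ (r.toNat) := by
            have : x = (↑u : F) := rfl
            rw [this, hur, Units.val_pow_eq_pow_val]
          refine Finset.mem_insert_of_mem (Finset.mem_image.mpr ⟨r.toNat, ?_, hxr.symm⟩)
          refine Finset.mem_range.mpr ?_
          omega
    -- power sums over E
    have hsum_pre : ∀ i : ℕ, 0 < i →
        ∑ x ∈ E, x ^ i = ∑ j ∈ Finset.range (q - 1), ((↑h : F) ^ i) ^ j := by
      intro i hi
      rw [hEdef, Finset.sum_insert h0notmem, zero_pow hi.ne', zero_add,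
        Finset.sum_image hinj_pow]
      exact Finset.sum_congr rfl fun j _ => by rw [← pow_mul, ← pow_mul, Nat.mul_comm]
    have hsum0 : ∀ i : ℕ, 0 < i → i < q - 1 → ∑ x ∈ E, x ^ i = 0 := by
      intro i hi0 hi1
      rw [hsum_pre i hi0, geom_sum_eq (hhne i hi0 hi1), ← pow_mul, Nat.mul_comm, pow_mul,
        hh1, one_pow, sub_self, zero_div]
    have hsum1 : ∑ x ∈ E, x ^ (q - 1) = -1 := by
      rw [hsum_pre (q - 1) (by omega), hh1]
      simp only [one_pow, Finset.sum_const, Finset.card_range, nsmul_eq_mul, mul_one]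
      rw [Nat.cast_sub (by omega : 1 ≤ q), hq0F, Nat.cast_one, zero_sub]
    -- the constant c
    set c : F := γ ^ (q + 3) + (γ ^ (q + 3)) ^ q with hcdef
    have hcq : c ^ q = c := by
      rw [hcdef, frobq, hpowq, add_comm]
    have hc : c ≠ 0 := by
      haveI : Fact (2 < p) := ⟨by omega⟩
      intro hc0
      rw [hcdef] at hc0
      have hx : (γ ^ (q + 3)) ^ q = γ ^ (3 * q + 1) := by
        rw [← pow_mul]
        have h1 : (q + 3) * q = 3 * q + q ^ 2 := by ring
        rw [h1, pow_add, hpow, ← pow_succ]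
      rw [hx] at hc0
      have h1 : γ ^ (3 * q + 1) = -γ ^ (q + 3) := eq_neg_of_add_eq_zero_right hc0
      have h2 : 3 * q + 1 = (q + 3) + (2 * q - 2) := by omega
      rw [h2, pow_add, ← mul_neg_one (γ ^ (q + 3))] at h1
      have h3 : γ ^ (2 * q - 2) = -1 := mul_left_cancel₀ (pow_ne_zero (q + 3) hγ) h1
      have h4 : (γ ^ (q - 1)) ^ 2 = -1 := by
        rw [← pow_mul]
        have : (q - 1) * 2 = 2 * q - 2 := by omega
        rw [this, h3]
      have h5 : (γ ^ (q - 1)) ^ (q + 1) = 1 := by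
        rw [← pow_mul]
        have : (q - 1) * (q + 1) = q ^ 2 - 1 := by rw [← hfac]; ring
        rw [this]
        have hone := FiniteField.pow_card_sub_one_eq_one γ hγ
        rwa [hF] at hone
      obtain ⟨t, ht⟩ : ∃ t, q + 1 = 2 * t := ⟨(q + 1) / 2, by omega⟩
      have hodd : Odd t := by rw [Nat.odd_iff]; omega
      rw [ht, pow_mul, h4, hodd.neg_one_pow] at h5
      exact CharP.neg_one_ne_one F p h5
    -- claim A
    have claimA : ∀ u : F, u ^ q = u →
        γ * u + γ * ((γ * u) ^ (q + 3) + ((γ * u) ^ (q + 3)) ^ q)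
          = γ * (u + c * u ^ 4) := by
      intro u hu
      have hu4 : u ^ (q + 3) = u ^ 4 := by
        rw [pow_add, hu]; ring
      have hu4q : (u ^ 4) ^ q = u ^ 4 := by
        rw [← pow_mul, Nat.mul_comm, pow_mul, hu]
      rw [mul_pow, hu4, mul_pow, hu4q, hcdef]
      ring
    -- the map φ and its properties
    set φ : F → F := fun u => u + c * u ^ 4 with hφdef
    have hφmem : ∀ u ∈ E, φ u ∈ E := by
      intro u hu
      have hu' := (hmemE u).mp hu
      refine (hmemE _).mpr ?_
      rw [hφdef]
      simp only
      rw [frobq, mul_pow, hcq, ← pow_mul, Nat.mul_comm 4 q, pow_mul, hu']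
    have hφinj : ∀ u ∈ E, ∀ v ∈ E, φ u = φ v → u = v := by
      intro u hu v hv huv
      have hu' := (hmemE u).mp hu
      have hv' := (hmemE v).mp hv
      have h1 : γ * u + γ * ((γ * u) ^ (q + 3) + ((γ * u) ^ (q + 3)) ^ q)
          = γ * v + γ * ((γ * v) ^ (q + 3) + ((γ * v) ^ (q + 3)) ^ q) := by
        rw [claimA u hu', claimA v hv']
        exact congrArg (fun t => γ * t) huv
      have h2 : γ * u = γ * v := hbij.1 h1
      exact mul_left_cancel₀ hγ h2
    have himage : E.image φ = E :=
      Finset.eq_of_subset_of_card_le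
        (fun x hx => by
          obtain ⟨u, hu, rfl⟩ := Finset.mem_image.mp hx
          exact hφmem u hu)
        (le_of_eq (Finset.card_image_of_injOn hφinj).symm)
    -- the exponent e
    obtain ⟨e, he⟩ : ∃ e : ℕ, q - 1 = 4 * e := ⟨(q - 1) / 4, by omega⟩
    have he1 : 1 ≤ e := by omega
    -- main computation
    have key : ∑ x ∈ E, x ^ e = ∑ u ∈ E, (φ u) ^ e := by
      conv_lhs => rw [← himage]
      exact Finset.sum_image fun x hx y hy hxy => hφinj x hx y hy hxy
    have hLHS : ∑ x ∈ E, x ^ e = 0 := hsum0 e he1 (by omega)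
    have hRHS : ∑ u ∈ E, (φ u) ^ e = -c ^ e := by
      have hexp : ∀ u : F, (φ u) ^ e =
          ∑ k ∈ Finset.range (e + 1),
            (c ^ (e - k) * (e.choose k : F)) * u ^ (4 * e - 3 * k) := by
        intro u
        rw [hφdef]
        simp only
        rw [add_pow]
        refine Finset.sum_congr rfl fun k hk => ?_
        have hk' : k ≤ e := Nat.lt_succ_iff.mp (Finset.mem_range.mp hk)
        rw [mul_pow, ← pow_mul]
        have h1 : 4 * e - 3 * k = k + 4 * (e - k) := by omega
        rw [h1, pow_add]
        ring
      calc ∑ u ∈ E, (φ u) ^ e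
          = ∑ k ∈ Finset.range (e + 1),
              (c ^ (e - k) * (e.choose k : F)) * ∑ u ∈ E, u ^ (4 * e - 3 * k) := by
            simp only [hexp]
            rw [Finset.sum_comm]
            exact Finset.sum_congr rfl fun k _ => (Finset.mul_sum _ _ _).symm
        _ = -c ^ e := by
            rw [Finset.sum_eq_single_of_mem 0 (Finset.mem_range.mpr (by omega))
              (fun k hk hk0 => by
                have hk' : k ≤ e := Nat.lt_succ_iff.mp (Finset.mem_range.mp hk)
                rw [hsum0 (4 * e - 3 * k) (by omega) (by omega), mul_zero])]
            have h40 : 4 * e - 3 * 0 = q - 1 := by omega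
            rw [h40, hsum1, Nat.sub_zero, Nat.choose_zero_right]
            push_cast
            ring
    rw [hLHS, hRHS] at key
    exact hc ((pow_eq_zero_iff (by omega : e ≠ 0)).mp (neg_eq_zero.mp key.symm))
  · rintro rfl
    simpa using Function.bijective_id
end

section
/- Let q be a prime power, n ≥ 1, and 1 ≤ i ≤ n−1. For every γ ∈ F_q, the map f(x) = x + γ·Tr(x² − x^{q^i + 1}) is a permutation of F_{q^n}. -/
section Aux

variable {F : Type*} [Field F] (p m : ℕ) [hp : Fact p.Prime] [CharP F p]

lemma aux_key (k : ℕ) (x : F) : x ^ (p ^ m) ^ k = iterateFrobenius F p (m * k) x := by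
  rw [iterateFrobenius_def, ← pow_mul]

lemma aux_trace_sub (n : ℕ) (a b : F) :
    fieldTrace (p ^ m) n (a - b) = fieldTrace (p ^ m) n a - fieldTrace (p ^ m) n b := by
  unfold fieldTrace
  rw [← Finset.sum_sub_distrib]
  refine Finset.sum_congr rfl fun j _ => ?_
  rw [aux_key, aux_key, aux_key, map_sub]

lemma aux_trace_add (n : ℕ) (a b : F) :
    fieldTrace (p ^ m) n (a + b) = fieldTrace (p ^ m) n a + fieldTrace (p ^ m) n b := by
  unfold fieldTrace
  rw [← Finset.sum_add_distrib]
  refine Finset.sum_congr rfl fun j _ => ?_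
  rw [aux_key, aux_key, aux_key, map_add]

lemma aux_trace_shift (n : ℕ) (hfix : ∀ x : F, x ^ (p ^ m) ^ n = x) (y : F) :
    fieldTrace (p ^ m) n (y ^ p ^ m) = fieldTrace (p ^ m) n y := by
  unfold fieldTrace
  have h1 : ∀ j : ℕ, (y ^ p ^ m) ^ (p ^ m) ^ j = y ^ (p ^ m) ^ (j + 1) := by
    intro j
    rw [← pow_mul, pow_succ']
  have h2 := Finset.sum_range_succ' (fun j => y ^ (p ^ m) ^ j) n
  have h3 := Finset.sum_range_succ (fun j => y ^ (p ^ m) ^ j) n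
  simp only [pow_zero, pow_one] at h2
  have h4 : (∑ j ∈ Finset.range n, y ^ (p ^ m) ^ (j + 1)) + y
      = (∑ j ∈ Finset.range n, y ^ (p ^ m) ^ j) + y := by
    rw [← h2, h3, hfix]
  have h5 := add_right_cancel h4
  calc ∑ j ∈ Finset.range n, (y ^ p ^ m) ^ (p ^ m) ^ j
      = ∑ j ∈ Finset.range n, y ^ (p ^ m) ^ (j + 1) := Finset.sum_congr rfl fun j _ => h1 j
    _ = ∑ j ∈ Finset.range n, y ^ (p ^ m) ^ j := h5

lemma aux_trace_pow_i (n i : ℕ) (hfix : ∀ x : F, x ^ (p ^ m) ^ n = x) (y : F) :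
    fieldTrace (p ^ m) n (y ^ (p ^ m) ^ i) = fieldTrace (p ^ m) n y := by
  induction i with
  | zero => simp
  | succ k ih =>
    have : y ^ (p ^ m) ^ (k + 1) = (y ^ (p ^ m) ^ k) ^ p ^ m := by
      rw [pow_succ ((p:ℕ) ^ m) k, pow_mul]
    rw [this, aux_trace_shift p m n hfix, ih]

lemma aux_trace_fixed (n : ℕ) (hfix : ∀ x : F, x ^ (p ^ m) ^ n = x) (y : F) :
    (fieldTrace (p ^ m) n y) ^ p ^ m = fieldTrace (p ^ m) n y := by
  have h1 : (fieldTrace (p ^ m) n y) ^ p ^ m = fieldTrace (p ^ m) n (y ^ p ^ m) := by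
    unfold fieldTrace
    rw [← iterateFrobenius_def, map_sum]
    refine Finset.sum_congr rfl fun j _ => ?_
    rw [iterateFrobenius_def, ← pow_mul, ← pow_mul, mul_comm, ← pow_mul]
  rw [h1, aux_trace_shift p m n hfix]

end Aux

theorem stmt_15 (p m n i : ℕ) (hp : p.Prime) (hm : 0 < m) (hn : 0 < n)
    (hi1 : 1 ≤ i) (hi2 : i ≤ n - 1)
    (F : Type*) [Field F] [Fintype F] (hF : Fintype.card F = (p ^ m) ^ n)
    (γ : F) (hγ : γ ^ p ^ m = γ) :
    Function.Bijective (fun x : F =>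
      x + γ * fieldTrace (p ^ m) n (x ^ 2 - x ^ ((p ^ m) ^ i + 1))) := by
  haveI : Fact p.Prime := ⟨hp⟩
  -- establish CharP F p
  have hcard : Fintype.card F = p ^ (m * n) := by rw [hF, ← pow_mul]
  obtain ⟨c, hc⟩ := CharP.exists F
  haveI := hc
  obtain ⟨k, hck, hcardc⟩ := FiniteField.card F c
  have hpc : p = c := by
    have hdvd : p ∣ c ^ (k : ℕ) := by
      rw [← hcardc, hcard]
      exact dvd_pow_self p (Nat.mul_pos hm hn).ne'
    exact ((Nat.prime_dvd_prime_iff_eq hp hck).mp (hp.dvd_of_dvd_pow hdvd))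
  subst hpc
  haveI : CharP F p := hc
  have hfix : ∀ x : F, x ^ (p ^ m) ^ n = x := by
    intro x
    rw [← hF, FiniteField.pow_card]
  rw [Fintype.bijective_iff_injective_and_card]
  refine ⟨?_, rfl⟩
  intro x y h
  simp only at h
  set g : F → F := fun z => fieldTrace (p ^ m) n (z ^ 2 - z ^ ((p ^ m) ^ i + 1)) with hg
  set r : F := γ * (g y - g x) with hrdef
  -- r is fixed by Frobenius^m
  have hTfix : ∀ z : F, (g z) ^ p ^ m = g z := fun z => aux_trace_fixed p m n hfix _
  have hr : r ^ p ^ m = r := by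
    rw [hrdef, mul_pow, hγ]
    have : (g y - g x) ^ p ^ m = g y - g x := by
      rw [← iterateFrobenius_def, map_sub, iterateFrobenius_def, iterateFrobenius_def,
        hTfix, hTfix]
    rw [this]
  have hri : ∀ k : ℕ, r ^ (p ^ m) ^ k = r := by
    intro k
    induction k with
    | zero => simp
    | succ k ih => rw [pow_succ, pow_mul, ih, hr]
  -- x = y + r
  have hxy : x = y + r := by
    rw [hrdef]
    linear_combination h
  have hexp : (y + r) ^ 2 - (y + r) ^ ((p ^ m) ^ i + 1)
      = (y ^ 2 - y ^ ((p ^ m) ^ i + 1)) + (r * y - (r * y) ^ (p ^ m) ^ i) := by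
    have h1 : (y + r) ^ (p ^ m) ^ i = y ^ (p ^ m) ^ i + r := by
      rw [aux_key p m, map_add, ← aux_key, ← aux_key, hri]
    have h2 : (r * y) ^ (p ^ m) ^ i = r * y ^ (p ^ m) ^ i := by
      rw [mul_pow, hri]
    have h3 : (y + r) ^ ((p ^ m) ^ i + 1) = (y ^ (p ^ m) ^ i + r) * (y + r) := by
      rw [pow_succ, h1]
    rw [h3, h2]
    ring
  have hgy : g (y + r) = g y := by
    show fieldTrace (p ^ m) n ((y + r) ^ 2 - (y + r) ^ ((p ^ m) ^ i + 1)) = g y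
    rw [hexp, aux_trace_add, aux_trace_sub, aux_trace_sub,
      aux_trace_pow_i p m n i hfix, sub_self, add_zero, ← aux_trace_sub]
  have hgx : g x = g y := by rw [hxy, hgy]
  have hr0 : r = 0 := by rw [hrdef, hgx, sub_self, mul_zero]
  rw [hxy, hr0, add_zero]
end

section
/- Let q be an odd prime power. The map f(x) = x + γ·Tr(x² − x^{q+1}) over F_{q²} is a permutation of F_{q²} if and only if γ ∈ F_q. -/
/-!
Write `σ x = x ^ q` for the Frobenius of `F` over its subfield of order `q`; it is an involutive
ring automorphism, and `Tr(x² - x^{q+1}) = (x - σ x)²`, so `f x = x + γ (x - σ x)²`.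
If `σ γ = γ`, then `f x - σ (f x) = x - σ x`, so `f x` determines `x - σ x` and hence `x`.
If `σ γ ≠ γ`, put `ε = γ - σ γ`; then `σ ε = -ε` and the nonzero point `x = -γ / ε²` satisfies
`x - σ x = -1 / ε`, so `f x = 0 = f 0`.
-/

section Involution

variable {R : Type*} [CommRing R] (σ : R →+* R)

theorem add_map_sq_sub_mul_map_eq_sub_map_sq (hσ : Function.Involutive σ) (x : R) :
    (x ^ 2 - x * σ x) + σ (x ^ 2 - x * σ x) = (x - σ x) ^ 2 := by
  rw [map_sub, map_mul, map_pow, hσ x]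
  ring

theorem injective_add_mul_sub_map_sq (hσ : Function.Involutive σ) {γ : R} (hγ : σ γ = γ) :
    Function.Injective fun x => x + γ * (x - σ x) ^ 2 := by
  intro x y hxy
  have hsub : ∀ z, (z + γ * (z - σ z) ^ 2) - σ (z + γ * (z - σ z) ^ 2) = z - σ z := by
    intro z
    rw [map_add, map_mul, map_pow, map_sub, hσ z, hγ]
    ring
  have hxy' : x - σ x = y - σ y := by
    simpa only [hsub] using congrArg (fun z => z - σ z) hxy
  simp only [hxy'] at hxy
  exact add_right_cancel hxy

theorem not_injective_add_mul_sub_map_sq {K : Type*} [Field K] (σ : K →+* K)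
    (hσ : Function.Involutive σ) {γ : K} (hγ : σ γ ≠ γ) :
    ¬ Function.Injective fun x => x + γ * (x - σ x) ^ 2 := by
  set ε := γ - σ γ with hε_def
  have hε : ε ≠ 0 := sub_ne_zero.mpr hγ.symm
  have hγ0 : γ ≠ 0 := by rintro rfl; exact hγ (map_zero σ)
  have hdiff : -γ / ε ^ 2 - σ (-γ / ε ^ 2) = -1 / ε := by
    rw [map_div₀, map_neg, map_pow, show σ ε = -ε by rw [hε_def, map_sub, hσ γ]; ring]
    field_simp
    ring
  intro hinj
  have hcollide : -γ / ε ^ 2 = 0 := hinj <| by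
    simp only [hdiff, map_zero, sub_zero]
    field_simp
    ring
  simp [hγ0, hε] at hcollide

end Involution

namespace FiniteField

variable {F : Type*} [Field F] [Fintype F] {q : ℕ}

theorem exists_eq_ringChar_pow_of_card_eq_sq (hF : Fintype.card F = q ^ 2) :
    ∃ n, q = ringChar F ^ n := by
  obtain ⟨n, hr, hcard⟩ := FiniteField.card F (ringChar F)
  obtain ⟨k, -, hk⟩ := (Nat.dvd_prime_pow hr).mp (hcard ▸ hF ▸ dvd_pow_self q two_ne_zero)
  exact ⟨k, hk⟩

theorem add_pow_of_card_eq_sq (hF : Fintype.card F = q ^ 2) (a b : F) :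
    (a + b) ^ q = a ^ q + b ^ q := by
  obtain ⟨n, rfl⟩ := exists_eq_ringChar_pow_of_card_eq_sq hF
  have : Fact (ringChar F).Prime := ⟨CharP.char_is_prime F _⟩
  exact add_pow_char_pow ..

def frobeniusOfCardEqSq (hF : Fintype.card F = q ^ 2) : F →+* F :=
  RingHom.mk' (powMonoidHom q) (add_pow_of_card_eq_sq hF)

theorem frobeniusOfCardEqSq_apply (hF : Fintype.card F = q ^ 2) (x : F) :
    frobeniusOfCardEqSq hF x = x ^ q := rfl

theorem frobeniusOfCardEqSq_involutive (hF : Fintype.card F = q ^ 2) :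
    Function.Involutive (frobeniusOfCardEqSq hF) := by
  intro x
  rw [frobeniusOfCardEqSq_apply, frobeniusOfCardEqSq_apply, ← pow_mul, ← sq, ← hF,
    FiniteField.pow_card]

end FiniteField

open FiniteField in
theorem stmt_16_general (p m : ℕ)
    (F : Type*) [Field F] [Fintype F] (hF : Fintype.card F = (p ^ m) ^ 2)
    (γ : F) :
    Function.Bijective (fun x : F =>
        x + γ * ((x ^ 2 - x ^ (p ^ m + 1)) + (x ^ 2 - x ^ (p ^ m + 1)) ^ p ^ m)) ↔
      γ ^ p ^ m = γ := by
  set σ := frobeniusOfCardEqSq hF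
  have hσ : Function.Involutive σ := frobeniusOfCardEqSq_involutive hF
  have hf : (fun x : F => x + γ * ((x ^ 2 - x ^ (p ^ m + 1)) + (x ^ 2 - x ^ (p ^ m + 1)) ^ p ^ m))
      = fun x => x + γ * (x - σ x) ^ 2 := by
    funext x
    rw [← add_map_sq_sub_mul_map_eq_sub_map_sq σ hσ, frobeniusOfCardEqSq_apply,
      frobeniusOfCardEqSq_apply, pow_succ' x (p ^ m)]
  rw [hf, ← Finite.injective_iff_bijective, ← frobeniusOfCardEqSq_apply hF γ]
  exact ⟨fun hinj => not_not.mp fun hγ => not_injective_add_mul_sub_map_sq σ hσ hγ hinj,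
    injective_add_mul_sub_map_sq σ hσ⟩

theorem stmt_16 (p m : ℕ) (hp : p.Prime) (hp2 : p ≠ 2) (hm : 0 < m)
    (F : Type*) [Field F] [Fintype F] (hF : Fintype.card F = (p ^ m) ^ 2)
    (γ : F) :
    Function.Bijective (fun x : F =>
        x + γ * ((x ^ 2 - x ^ (p ^ m + 1)) + (x ^ 2 - x ^ (p ^ m + 1)) ^ p ^ m)) ↔
      γ ^ p ^ m = γ :=
  stmt_16_general p m F hF γ
end

section
/- Let q be an odd prime power. The map f(x) = x + γ·Tr(x³ − x^{q+2}) over F_{q²} is a permutation of F_{q²} if and only if γ ∈ F_q and −2γ is a square in F_q. -/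
theorem stmt_17 (p m : ℕ) (hp : p.Prime) (hp2 : p ≠ 2) (hm : 0 < m)
    (F : Type*) [Field F] [Fintype F] (hF : Fintype.card F = (p ^ m) ^ 2)
    (γ : F) :
    Function.Bijective (fun x : F =>
        x + γ * ((x ^ 3 - x ^ (p ^ m + 2)) + (x ^ 3 - x ^ (p ^ m + 2)) ^ p ^ m)) ↔
      (γ ^ p ^ m = γ ∧ ∃ w : F, w ^ p ^ m = w ∧ w ^ 2 = -2 * γ) := by
  haveI fact : Fact p.Prime := ⟨hp⟩
  haveI hchar : CharP F p := by
    haveI := ringChar.charP F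
    obtain ⟨n, hrp, hcard⟩ := FiniteField.card F (ringChar F)
    have h1 : ringChar F ∣ (p ^ m) ^ 2 := by
      rw [← hF, hcard]; exact dvd_pow_self _ n.pos.ne'
    have hdvd : ringChar F ∣ p := hrp.dvd_of_dvd_pow (hrp.dvd_of_dvd_pow h1)
    exact ringChar.of_eq ((Nat.prime_dvd_prime_iff_eq hrp hp).mp hdvd)
  set q := p ^ m with hqdef
  have hq3 : 3 ≤ q := le_trans (by have := hp.two_le; omega : 3 ≤ p) (Nat.le_self_pow hm.ne' p)
  have hqodd : Odd q := (hp.odd_of_ne_two hp2).pow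
  have h2F : (2 : F) ≠ 0 := by
    have h := CharP.cast_ne_zero_of_ne_of_prime F Nat.prime_two hp2
    exact_mod_cast h
  have h4F : (4 : F) ≠ 0 := by
    rw [show (4 : F) = 2 * 2 by norm_num]; exact mul_ne_zero h2F h2F
  have h8F : (8 : F) ≠ 0 := by
    rw [show (8 : F) = 2 * 4 by norm_num]; exact mul_ne_zero h2F h4F
  have hpow : ∀ a : F, a ^ q ^ 2 = a := by
    intro a; rw [← hF]; exact FiniteField.pow_card a
  have hQQ : ∀ a : F, (a ^ q) ^ q = a := by
    intro a; rw [← pow_mul, ← pow_two]; exact hpow a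
  have hadd : ∀ a b : F, (a + b) ^ q = a ^ q + b ^ q := by
    intro a b; rw [hqdef]; exact add_pow_char_pow a b p m
  have hsub : ∀ a b : F, (a - b) ^ q = a ^ q - b ^ q := by
    intro a b; rw [hqdef]; exact sub_pow_char_pow a b m
  have h2q : (2 : F) ^ q = 2 := by
    rw [show (2 : F) = 1 + 1 by norm_num, hadd, one_pow]
  have h4q : (4 : F) ^ q = 4 := by
    rw [show (4 : F) = 2 * 2 by norm_num, mul_pow, h2q]
  have h8q : (8 : F) ^ q = 8 := by
    rw [show (8 : F) = 2 * 4 by norm_num, mul_pow, h2q, h4q]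
  have hkey : ∀ x : F, (x ^ 3 - x ^ (q + 2)) + (x ^ 3 - x ^ (q + 2)) ^ q
      = (x - x ^ q) ^ 2 * (x + x ^ q) := by
    intro x
    have e2 : (x ^ 3) ^ q = (x ^ q) ^ 3 := by rw [← pow_mul, mul_comm, pow_mul]
    have e3 : (x ^ (q + 2)) ^ q = x * (x ^ q) ^ 2 := by
      rw [← pow_mul, show (q + 2) * q = q * q + q * 2 by ring, pow_add, pow_mul, pow_mul, hQQ]
    rw [hsub, e2, e3, pow_add x q 2]
    ring
  set f : F → F := fun x => x + γ * ((x ^ 3 - x ^ (q + 2)) + (x ^ 3 - x ^ (q + 2)) ^ q)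
    with hfdef
  have hf : ∀ x : F, f x = x + γ * ((x - x ^ q) ^ 2 * (x + x ^ q)) := by
    intro x; rw [hfdef]; dsimp only; rw [hkey]
  have hsq : ∀ x : F, (x - x ^ q) ^ q = -(x - x ^ q) := by
    intro x; rw [hsub, hQQ]; ring
  constructor
  · -- forward
    intro hbij
    have hinj := hbij.injective
    have hfixK : ∀ z : F, z ^ q = z → f z = z := by
      intro z hz; rw [hf, hz]; ring
    obtain ⟨x0, hx0⟩ : ∃ x : F, x ^ q ≠ x := by
      by_contra hall
      push_neg at hall
      obtain ⟨g, hg⟩ := IsCyclic.exists_generator (α := Fˣ)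
      have hord : orderOf g = q ^ 2 - 1 := by
        rw [orderOf_eq_card_of_forall_mem_zpowers hg, Nat.card_units,
          Nat.card_eq_fintype_card, hF]
      have hgq : g ^ q = g := Units.ext (by rw [Units.val_pow_eq_pow_val]; exact hall g)
      have hg1 : g ^ (q - 1) = 1 := by
        have h5 : g ^ (q - 1) * g = 1 * g := by
          rw [← pow_succ, Nat.sub_add_cancel (by omega), hgq, one_mul]
        exact mul_right_cancel h5
      have hdvd := orderOf_dvd_of_pow_eq_one hg1
      rw [hord] at hdvd
      have hle := Nat.le_of_dvd (by omega) hdvd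
      have h9 : 3 * q ≤ q * q := Nat.mul_le_mul_right q (by omega)
      have h10 : q ^ 2 = q * q := sq q
      omega
    set β := x0 - x0 ^ q with hβ
    have hβ0 : β ≠ 0 := sub_ne_zero.mpr (Ne.symm hx0)
    have hβq : β ^ q = -β := hsq x0
    have hβ2 : (β ^ 2) ^ q = β ^ 2 := by rw [pow_right_comm, hβq, neg_sq]
    have hγq : γ ^ q = γ := by
      by_contra hne
      have hγ0 : γ ≠ 0 := by
        rintro rfl; exact hne (by rw [zero_pow (by omega : q ≠ 0)])
      have hne' : γ ^ q - γ ≠ 0 := sub_ne_zero.mpr hne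
      have hD0 : 4 * β * (γ ^ q - γ) ≠ 0 := mul_ne_zero (mul_ne_zero h4F hβ0) hne'
      set a := (4 * β * (γ ^ q - γ))⁻¹ with ha
      have haq : a ^ q = a := by
        rw [ha, inv_pow, mul_pow, mul_pow, h4q, hβq, hsub, hQQ]
        congr 1; ring
      have ha0 : a ≠ 0 := inv_ne_zero hD0
      set x := a + β with hx
      have hxq : x ^ q = a - β := by rw [hx, hadd, haq, hβq]; ring
      have hfx : f x = a + β + 8 * γ * β ^ 2 * a := by
        rw [hf, hxq, hx]; ring
      have hfxq : (f x) ^ q = f x := by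
        rw [hfx]
        simp only [hadd, mul_pow]
        rw [haq, hβq, h8q, hβ2, ha]
        field_simp
        ring
      have heq : f x = x := hinj (hfixK (f x) hfxq)
      rw [hfx, hx] at heq
      have h0 : 8 * γ * β ^ 2 * a = 0 := by linear_combination heq
      exact (mul_ne_zero (mul_ne_zero (mul_ne_zero h8F hγ0) (pow_ne_zero 2 hβ0)) ha0) h0
    refine ⟨hγq, ?_⟩
    by_cases hγ0 : γ = 0
    · exact ⟨0, by rw [zero_pow (by omega : q ≠ 0)], by rw [hγ0]; ring⟩
    · have hden : 8 * γ * β ^ 2 ≠ 0 :=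
        mul_ne_zero (mul_ne_zero h8F hγ0) (pow_ne_zero 2 hβ0)
      set u := -(8 * γ * β ^ 2)⁻¹ with hu
      have hu0 : u ≠ 0 := by rw [hu]; exact neg_ne_zero.mpr (inv_ne_zero hden)
      have huq : u ^ q = u := by
        rw [hu, hqodd.neg_pow, inv_pow, mul_pow, mul_pow, h8q, hγq, hβ2]
      have hchar2 : ringChar F ≠ 2 := by rw [ringChar.eq F p]; exact hp2
      have husq : IsSquare u := by
        rw [FiniteField.isSquare_iff hchar2 hu0, hF]
        obtain ⟨r, hr⟩ := hqodd
        have e1 : q ^ 2 / 2 = (q - 1) * (r + 1) := by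
          have h1 : q ^ 2 = 4 * (r * r) + 4 * r + 1 := by rw [hr]; ring
          have h2 : (q - 1) * (r + 1) = 2 * (r * r) + 2 * r := by
            rw [show q - 1 = 2 * r by omega]; ring
          omega
        have huq1 : u ^ (q - 1) = 1 := by
          have h5 : u ^ (q - 1) * u = 1 * u := by
            rw [← pow_succ, Nat.sub_add_cancel (by omega), huq, one_mul]
          exact mul_right_cancel₀ hu0 h5
        rw [e1, pow_mul, huq1, one_pow]
      obtain ⟨z, hz⟩ := husq
      have hzz : (z ^ q - z) * (z ^ q + z) = 0 := by
        have h6 : (z * z) ^ q = z * z := by rw [← hz]; exact huq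
        rw [mul_pow] at h6
        linear_combination h6
      rcases mul_eq_zero.mp hzz with h | h
      · -- z ^ q = z : contradiction with injectivity
        exfalso
        have hzq : z ^ q = z := by linear_combination h
        have hzb : 8 * γ * β ^ 2 * (z * z) = -1 := by
          rw [← hz, hu]
          field_simp
        have e1 : f (β * z) = β * z := by
          rw [hf]
          rw [show (β * z) ^ q = -(β * z) by rw [mul_pow, hβq, hzq]; ring]
          ring
        have e2 : f (1 + β * z) = β * z := by
          rw [hf]
          rw [show (1 + β * z) ^ q = 1 - β * z by
            rw [hadd, one_pow, mul_pow, hβq, hzq]; ring]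
          linear_combination hzb
        have heq : β * z = 1 + β * z := hinj (e1.trans e2.symm)
        exact one_ne_zero (α := F) (by linear_combination -heq)
      · -- z ^ q = -z : construct w
        have hzq : z ^ q = -z := by linear_combination h
        have hw0 : (β * z) ^ q = β * z := by rw [mul_pow, hβq, hzq]; ring
        refine ⟨(2 * (β * z))⁻¹, ?_, ?_⟩
        · rw [inv_pow, mul_pow, h2q, hw0]
        · have key : (-2 * γ) * (2 * (β * z)) ^ 2 = 1 := by
            have e7 : (-2 * γ) * (2 * (β * z)) ^ 2 = -(8 * γ * β ^ 2) * (z * z) := by ring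
            rw [e7, ← hz, hu]
            field_simp
          rw [inv_pow]
          exact inv_eq_of_mul_eq_one_left key
  · -- backward
    rintro ⟨hγ, w, hwq, hw2⟩
    rw [← Finite.injective_iff_bijective]
    intro x y hxy
    rw [hf, hf] at hxy
    have hSx : ((x - x ^ q) ^ 2 * (x + x ^ q)) ^ q = (x - x ^ q) ^ 2 * (x + x ^ q) := by
      rw [mul_pow, pow_right_comm, hsq, neg_sq, hadd, hQQ, add_comm]
    have hSy : ((y - y ^ q) ^ 2 * (y + y ^ q)) ^ q = (y - y ^ q) ^ 2 * (y + y ^ q) := by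
      rw [mul_pow, pow_right_comm, hsq, neg_sq, hadd, hQQ, add_comm]
    have h2 : x ^ q + γ * ((x - x ^ q) ^ 2 * (x + x ^ q))
        = y ^ q + γ * ((y - y ^ q) ^ 2 * (y + y ^ q)) := by
      have h7 := congrArg (· ^ q) hxy
      simp only [hadd, mul_pow, hγ, hSx, hSy] at h7
      exact h7
    have hc : x - y = x ^ q - y ^ q := by linear_combination hxy - h2
    have hs : x - x ^ q = y - y ^ q := by linear_combination hxy - h2
    rw [← hs] at hxy
    have hd : (x - y) * (1 + 2 * γ * (x - x ^ q) ^ 2) = 0 := by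
      linear_combination hxy + γ * (x - x ^ q) ^ 2 * hc
    rcases mul_eq_zero.mp hd with h | h
    · exact sub_eq_zero.mp h
    · exfalso
      have h1 : (w * (x - x ^ q)) * (w * (x - x ^ q)) = 1 := by
        linear_combination (x - x ^ q) ^ 2 * hw2 - h
      have h2' : (w * (x - x ^ q)) ^ q = -(w * (x - x ^ q)) := by
        rw [mul_pow, hwq, hsq]; ring
      rcases mul_self_eq_one_iff.mp h1 with h4 | h4
      · rw [h4, one_pow] at h2'
        exact h2F (by linear_combination h2')
      · rw [h4, hqodd.neg_pow, one_pow] at h2'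
        exact h2F (by linear_combination -h2')
end

section
/- Let q be an odd prime power. The map f(x) = x + γ·Tr(x^{q+3} − x^{2q+2}) over F_{q²} is a permutation of F_{q²} if and only if γ = 0; the same conclusion holds for f(x) = x + γ·Tr(x^{q+3} + x^{2q+2}). -/
lemma Lpow (F : Type*) [Field F] [Fintype F] (A B : ℕ) (hB : B ≠ 0)
    (hAB : A * B = Fintype.card F - 1) (K : F) (hK : K ≠ 0) (h1 : K ^ B = 1) :
    ∃ z : F, z ≠ 0 ∧ z ^ A = K := by
  classical
  obtain ⟨g, hg⟩ := IsCyclic.exists_generator (α := Fˣ)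
  have hord : orderOf g = Fintype.card F - 1 := by
    rw [orderOf_eq_card_of_forall_mem_zpowers hg, Nat.card_eq_fintype_card,
      Fintype.card_units]
  obtain ⟨t, ht⟩ := mem_powers_iff_mem_zpowers.mpr (hg (Units.mk0 K hK))
  have ht' : g ^ t = Units.mk0 K hK := ht
  have hu : (Units.mk0 K hK) ^ B = 1 := by
    ext; push_cast; exact h1
  have hdvd : orderOf g ∣ t * B := by
    rw [orderOf_dvd_iff_pow_eq_one, pow_mul, ht', hu]
  rw [hord, ← hAB] at hdvd
  obtain ⟨s, hs⟩ := (Nat.mul_dvd_mul_iff_right (Nat.pos_of_ne_zero hB)).mp hdvd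
  refine ⟨((g ^ s : Fˣ) : F), Units.ne_zero _, ?_⟩
  have h5 : (g ^ s) ^ A = Units.mk0 K hK := by
    rw [← pow_mul, mul_comm s A, ← hs, ht']
  calc ((g ^ s : Fˣ) : F) ^ A = (((g ^ s) ^ A : Fˣ) : F) := by push_cast; ring
    _ = K := by rw [h5]; rfl

lemma Lmu (F : Type*) [Field F] [Fintype F] (q : ℕ) (hq : Fintype.card F = q * q)
    (hq2 : 2 ≤ q) : ∃ μ : F, μ ≠ 0 ∧ μ ^ (q + 1) = 1 ∧ μ ^ q ≠ μ := by
  classical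
  obtain ⟨g, hg⟩ := IsCyclic.exists_generator (α := Fˣ)
  have hord : orderOf g = q * q - 1 := by
    rw [orderOf_eq_card_of_forall_mem_zpowers hg, Nat.card_eq_fintype_card,
      Fintype.card_units, hq]
  have harith : (q - 1) * (q + 1) = q * q - 1 := by
    rcases Nat.exists_eq_add_of_le hq2 with ⟨k, rfl⟩
    have h1 : 2 + k - 1 = k + 1 := by omega
    have h2 : (2 + k) * (2 + k) = k * k + (4 * k + 4) := by ring
    have h3 : (k + 1) * (2 + k + 1) = k * k + (4 * k + 3) := by ring
    rw [h1]
    omega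
  have hpow : (g ^ (q - 1)) ^ (q + 1) = 1 := by
    rw [← pow_mul, ← orderOf_dvd_iff_pow_eq_one, hord, harith]
  refine ⟨((g ^ (q - 1) : Fˣ) : F), Units.ne_zero _, ?_, ?_⟩
  · have := congrArg Units.val hpow
    push_cast at this
    simpa using this
  · intro h
    set x : Fˣ := g ^ (q - 1) with hx
    have h2 : x ^ q = x := by
      ext; push_cast; exact h
    have h3 : x ^ (q - 1) = 1 := by
      have hqq : q = (q - 1) + 1 := by omega
      have := h2
      rw [hqq, pow_succ] at this
      exact mul_right_cancel (by rwa [one_mul])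
    have h4 : (1 : Fˣ) = g ^ ((q - 1) * (q - 1)) := by rw [pow_mul, h3]
    have h5 : orderOf g ∣ (q - 1) * (q - 1) := by
      rw [orderOf_dvd_iff_pow_eq_one, ← h4]
    rw [hord] at h5
    have h6 : q * q - 1 ≤ (q - 1) * (q - 1) := Nat.le_of_dvd (Nat.mul_pos (by omega) (by omega)) h5
    rcases Nat.exists_eq_add_of_le hq2 with ⟨k, rfl⟩
    have h1 : 2 + k - 1 = k + 1 := by omega
    rw [h1] at h6
    have h7 : (k + 1) * (k + 1) = k * k + (2 * k + 1) := by ring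
    have h2' : (2 + k) * (2 + k) = k * k + (4 * k + 4) := by ring
    omega

section Aux
variable {F : Type*} [Field F]

lemma keym (q : ℕ) (φ : F →+* F) (hφ : ∀ x : F, φ x = x ^ q)
    (x y : F) (hy : φ x = y) (hx : φ y = x) :
    (x ^ (q + 3) - x ^ (2 * q + 2)) + (x ^ (q + 3) - x ^ (2 * q + 2)) ^ q
      = x * y * (x - y) ^ 2 := by
  have hxq : x ^ q = y := by rw [← hφ x, hy]
  have hyq : y ^ q = x := by rw [← hφ y, hx]
  have e3 : (x ^ (q + 3) - x ^ (2 * q + 2)) ^ q = φ (x ^ (q + 3) - x ^ (2 * q + 2)) :=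
    (hφ _).symm
  rw [e3, map_sub, map_pow, map_pow, hy]
  have e1 : x ^ (q + 3) = y * x ^ 3 := by rw [pow_add, hxq]
  have e2 : x ^ (2 * q + 2) = y ^ 2 * x ^ 2 := by rw [pow_add, mul_comm 2 q, pow_mul, hxq]
  have e4 : y ^ (q + 3) = x * y ^ 3 := by rw [pow_add, hyq]
  have e5 : y ^ (2 * q + 2) = x ^ 2 * y ^ 2 := by rw [pow_add, mul_comm 2 q, pow_mul, hyq]
  rw [e1, e2, e4, e5]; ring

lemma keyp (q : ℕ) (φ : F →+* F) (hφ : ∀ x : F, φ x = x ^ q)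
    (x y : F) (hy : φ x = y) (hx : φ y = x) :
    (x ^ (q + 3) + x ^ (2 * q + 2)) + (x ^ (q + 3) + x ^ (2 * q + 2)) ^ q
      = x * y * (x + y) ^ 2 := by
  have hxq : x ^ q = y := by rw [← hφ x, hy]
  have hyq : y ^ q = x := by rw [← hφ y, hx]
  have e3 : (x ^ (q + 3) + x ^ (2 * q + 2)) ^ q = φ (x ^ (q + 3) + x ^ (2 * q + 2)) :=
    (hφ _).symm
  rw [e3, map_add, map_pow, map_pow, hy]
  have e1 : x ^ (q + 3) = y * x ^ 3 := by rw [pow_add, hxq]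
  have e2 : x ^ (2 * q + 2) = y ^ 2 * x ^ 2 := by rw [pow_add, mul_comm 2 q, pow_mul, hxq]
  have e4 : y ^ (q + 3) = x * y ^ 3 := by rw [pow_add, hyq]
  have e5 : y ^ (2 * q + 2) = x ^ 2 * y ^ 2 := by rw [pow_add, mul_comm 2 q, pow_mul, hyq]
  rw [e1, e2, e4, e5]; ring

lemma bij_conj (c : F) (hc : c ≠ 0) (f : F → F) :
    Function.Bijective (fun x => c⁻¹ * f (c * x)) ↔ Function.Bijective f := by
  constructor
  · intro h
    have h1 : f = fun y => c * (c⁻¹ * f (c * (c⁻¹ * y))) := by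
      funext y
      field_simp
    rw [h1]
    exact (Equiv.mulLeft₀ c hc).bijective.comp
      (h.comp (Equiv.mulLeft₀ c⁻¹ (inv_ne_zero hc)).bijective)
  · intro h
    exact (Equiv.mulLeft₀ c⁻¹ (inv_ne_zero hc)).bijective.comp
      (h.comp (Equiv.mulLeft₀ c hc).bijective)

end Aux

theorem stmt_19 (p m : ℕ) (hp : p.Prime) (hp2 : p ≠ 2) (hm : 0 < m)
    (F : Type*) [Field F] [Fintype F] (hF : Fintype.card F = (p ^ m) ^ 2)
    (γ : F) :
    (Function.Bijective (fun x : F =>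
        x + γ * ((x ^ (p ^ m + 3) - x ^ (2 * p ^ m + 2)) +
          (x ^ (p ^ m + 3) - x ^ (2 * p ^ m + 2)) ^ p ^ m)) ↔ γ = 0) ∧
    (Function.Bijective (fun x : F =>
        x + γ * ((x ^ (p ^ m + 3) + x ^ (2 * p ^ m + 2)) +
          (x ^ (p ^ m + 3) + x ^ (2 * p ^ m + 2)) ^ p ^ m)) ↔ γ = 0) := by
  haveI : Fact p.Prime := ⟨hp⟩
  set q := p ^ m with hqdef
  -- characteristic
  haveI hcharR := ringChar.charP F
  obtain ⟨n, hnprime, hncard⟩ := FiniteField.card F (ringChar F)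
  have hrp : ringChar F = p := by
    have h1 : ringChar F ∣ Fintype.card F := by
      rw [hncard]; exact dvd_pow_self _ n.ne_zero
    rw [hF, hqdef] at h1
    have h2 : ringChar F ∣ p := hnprime.dvd_of_dvd_pow (hnprime.dvd_of_dvd_pow h1)
    exact (Nat.prime_dvd_prime_iff_eq hnprime hp).mp h2
  haveI hchar : CharP F p := hrp ▸ hcharR
  -- basic numerics
  have hp3 : 3 ≤ p := by have := hp.two_le; omega
  have hq3 : 3 ≤ q := le_trans hp3 (Nat.le_self_pow (by omega) p)
  have hqodd : Odd q := (hp.odd_of_ne_two hp2).pow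
  have hcard : Fintype.card F = q * q := by rw [hF]; exact pow_two q
  have h2 : (2 : F) ≠ 0 := by
    intro h
    have h1 : (p : ℕ) ∣ 2 := (CharP.cast_eq_zero_iff F p 2).mp (by exact_mod_cast h)
    have := Nat.le_of_dvd (by norm_num) h1
    omega
  have h4 : (4 : F) ≠ 0 := by
    have h44 : (4 : F) = 2 * 2 := by norm_num
    rw [h44]; exact mul_ne_zero h2 h2
  have h8 : (8 : F) ≠ 0 := by
    have : (8 : F) = 2 * 4 := by norm_num
    rw [this]; exact mul_ne_zero h2 h4
  -- Frobenius
  set φ : F →+* F := iterateFrobenius F p m with hφdef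
  have hφ : ∀ x : F, φ x = x ^ q := fun x => iterateFrobenius_def p m x
  have hφφ : ∀ x : F, φ (φ x) = x := by
    intro x
    rw [hφ (φ x), hφ x, ← pow_mul, ← hcard]
    exact FiniteField.pow_card x
  -- theta
  have hex : ∃ ξ : F, φ ξ ≠ ξ := by
    by_contra hcon
    push_neg at hcon
    have hall : ∀ x ∈ (Finset.univ : Finset F),
        Polynomial.eval x ((Polynomial.X : Polynomial F) ^ q - Polynomial.X) = 0 := by
      intro x _
      simp only [Polynomial.eval_sub, Polynomial.eval_pow, Polynomial.eval_X]
      rw [← hφ, hcon, sub_self]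
    have hdeg : ((Polynomial.X : Polynomial F) ^ q - Polynomial.X).natDegree < q * q := by
      have hd1 : ((Polynomial.X : Polynomial F) ^ q - Polynomial.X).natDegree ≤ q := by
        refine le_trans (Polynomial.natDegree_sub_le _ _) ?_
        rw [Polynomial.natDegree_X_pow, Polynomial.natDegree_X]
        omega
      have hd2 : q < q * q := by nlinarith
      omega
    have h0 := Polynomial.eq_zero_of_natDegree_lt_card_of_eval_eq_zero'
      ((Polynomial.X : Polynomial F) ^ q - Polynomial.X) Finset.univ hall
      (by rwa [Finset.card_univ, hcard])
    have hxx : (Polynomial.X : Polynomial F) ^ q = Polynomial.X := sub_eq_zero.mp h0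
    have hnd := congrArg Polynomial.natDegree hxx
    rw [Polynomial.natDegree_X_pow, Polynomial.natDegree_X] at hnd
    omega
  obtain ⟨ξ, hξ⟩ := hex
  obtain ⟨θ, hθ0, hθq⟩ : ∃ θ : F, θ ≠ 0 ∧ φ θ = -θ := by
    refine ⟨ξ - φ ξ, sub_ne_zero.mpr (Ne.symm hξ), ?_⟩
    rw [map_sub, hφφ]; ring
  have hθ2 : φ (θ ^ 2) = θ ^ 2 := by rw [map_pow, hθq]; ring
  have hθ4 : φ (θ ^ 4) = θ ^ 4 := by rw [map_pow, hθq]; ring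
  -- group-theoretic facts
  have hKpow : ∀ K : F, K ≠ 0 → φ K = K → K ^ (q - 1) = 1 := by
    intro K hK0 hKf
    have h1 : K ^ q = K := by rw [← hφ]; exact hKf
    have h2' : q = (q - 1) + 1 := by omega
    rw [h2', pow_succ] at h1
    have := mul_right_cancel₀ hK0 (h1.trans (one_mul K).symm)
    exact this
  have harith2 : (q + 1) * (q - 1) = q * q - 1 := by
    rcases Nat.exists_eq_add_of_le hq3 with ⟨k, hk⟩
    rw [hk]
    have e0 : 3 + k - 1 = k + 2 := by omega
    rw [e0]
    have e1 : (3 + k + 1) * (k + 2) = k * k + (6 * k + 8) := by ring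
    have e2 : (3 + k) * (3 + k) = k * k + (6 * k + 9) := by ring
    omega
  have hNorm : ∀ K : F, K ≠ 0 → φ K = K → ∃ z : F, z ≠ 0 ∧ z * φ z = K := by
    intro K hK0 hKf
    obtain ⟨z, hz0, hz⟩ := Lpow F (q + 1) (q - 1) (by omega)
      (by rw [hcard]; exact harith2) K hK0 (hKpow K hK0 hKf)
    refine ⟨z, hz0, ?_⟩
    rw [hφ, mul_comm, ← pow_succ]
    exact hz
  have hSq : ∀ K : F, K ≠ 0 → φ K = K → ∃ w : F, w ≠ 0 ∧ w ^ 2 = K := by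
    intro K hK0 hKf
    obtain ⟨j, hj⟩ := hqodd
    have hhalf : (q + 1) / 2 = j + 1 := by omega
    have harith1 : 2 * ((q - 1) * ((q + 1) / 2)) = q * q - 1 := by
      have e2' : q - 1 = 2 * j := by omega
      rw [hhalf, e2', hj]
      have e1 : (2 * j + 1) * (2 * j + 1) = 2 * (2 * j * (j + 1)) + 1 := by ring
      rw [e1, Nat.add_sub_cancel]
    have hB0 : (q - 1) * ((q + 1) / 2) ≠ 0 :=
      Nat.mul_ne_zero (by omega) (by omega)
    have h1 : K ^ ((q - 1) * ((q + 1) / 2)) = 1 := by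
      rw [pow_mul, hKpow K hK0 hKf, one_pow]
    obtain ⟨w, hw0, hw⟩ := Lpow F 2 ((q - 1) * ((q + 1) / 2)) hB0
      (by rw [hcard]; exact harith1) K hK0 h1
    exact ⟨w, hw0, hw⟩
  have hmu : ∃ μ : F, μ ≠ 0 ∧ μ * φ μ = 1 ∧ φ μ ≠ μ := by
    obtain ⟨μ, hμ0, hμ1, hμ2⟩ := Lmu F q hcard (by omega)
    refine ⟨μ, hμ0, ?_, ?_⟩
    · rw [hφ, mul_comm, ← pow_succ]; exact hμ1
    · rw [hφ]; exact hμ2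
  -- the collision existence for the minus-type map
  have main : ∀ δ : F, δ ≠ 0 → ∃ x y : F, x ≠ y ∧
      (x + δ * ((x ^ (q + 3) - x ^ (2 * q + 2)) + (x ^ (q + 3) - x ^ (2 * q + 2)) ^ q)) =
      (y + δ * ((y ^ (q + 3) - y ^ (2 * q + 2)) + (y ^ (q + 3) - y ^ (2 * q + 2)) ^ q)) := by
    intro δ hδ
    have fmEq : ∀ z : F, z + δ * ((z ^ (q + 3) - z ^ (2 * q + 2)) +
        (z ^ (q + 3) - z ^ (2 * q + 2)) ^ q) = z + δ * (z * φ z * (z - φ z) ^ 2) := by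
      intro z
      rw [keym q φ hφ z (φ z) rfl (hφφ z)]
    obtain ⟨s, hsdef⟩ : ∃ a : F, a = (2 : F)⁻¹ := ⟨_, rfl⟩
    have hs : 2 * s = 1 := by rw [hsdef]; exact mul_inv_cancel₀ h2
    have hs0 : s ≠ 0 := by rw [hsdef]; exact inv_ne_zero h2
    have hφs : φ s = s := by rw [hsdef, map_inv₀, map_ofNat]
    obtain ⟨γ₁, hγ₁⟩ : ∃ a : F, a = (δ + φ δ) / 2 := ⟨_, rfl⟩
    obtain ⟨γ₂, hγ₂⟩ : ∃ a : F, a = (δ - φ δ) / (2 * θ) := ⟨_, rfl⟩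
    have hφγ₁ : φ γ₁ = γ₁ := by
      rw [hγ₁, map_div₀, map_add, hφφ, map_ofNat]; ring_nf
    have hφγ₂ : φ γ₂ = γ₂ := by
      have h1 : φ γ₂ = (φ δ - δ) / (2 * -θ) := by
        rw [hγ₂, map_div₀, map_sub, map_mul, map_ofNat, hφφ, hθq]
      rw [h1, hγ₂, mul_neg, div_neg, ← neg_div, neg_sub]
    have hdec : δ = γ₁ + θ * γ₂ := by
      rw [hγ₁, hγ₂]; field_simp; ring
    by_cases hc2 : γ₂ = 0
    · -- Case A : δ in the base field
      have h0 : (δ - φ δ) / (2 * θ) = 0 := by rw [← hγ₂]; exact hc2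
      have hφδ : φ δ = δ := by
        rcases div_eq_zero_iff.mp h0 with h1 | h1
        · exact (sub_eq_zero.mp h1).symm
        · exact absurd h1 (mul_ne_zero h2 hθ0)
      have hA0 : (4 * θ ^ 2 * δ : F) ≠ 0 :=
        mul_ne_zero (mul_ne_zero h4 (pow_ne_zero 2 hθ0)) hδ
      obtain ⟨c, hcdef⟩ : ∃ a : F, a = (4 * θ ^ 2 * δ)⁻¹ := ⟨_, rfl⟩
      have hcA : 4 * θ ^ 2 * δ * c = 1 := by rw [hcdef]; exact mul_inv_cancel₀ hA0
      have hc0 : c ≠ 0 := by rw [hcdef]; exact inv_ne_zero hA0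
      have hfix : φ (4 * θ ^ 2 * δ) = 4 * θ ^ 2 * δ := by
        rw [map_mul, map_mul, map_ofNat, map_pow, hθq, hφδ]; ring
      have hφc : φ c = c := by rw [hcdef, map_inv₀, hfix]
      refine ⟨θ, θ - c, ?_, ?_⟩
      · intro h
        exact hc0 (sub_eq_self.mp h.symm)
      · rw [fmEq, fmEq]
        have hφy : φ (θ - c) = -θ - c := by rw [map_sub, hθq, hφc]
        rw [hθq, hφy]
        linear_combination (-c) * hcA
    · -- γ₂ ≠ 0
      by_cases hc1 : γ₁ = 0
      · -- Case C : δ = θ * γ₂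
        have hδθg : δ = θ * γ₂ := by rw [hdec, hc1]; ring
        have finisher : ∀ r u v : F, φ r = r → φ u = u → φ v = v → u ≠ v →
            1 + 4*θ^2*γ₂*(u+v)*r^2 - 2*θ^4*γ₂*(u+v)*((u+v)^2+(u-v)^2) = 0 →
            ∃ x y : F, x ≠ y ∧
            (x + δ * ((x ^ (q + 3) - x ^ (2 * q + 2)) + (x ^ (q + 3) - x ^ (2 * q + 2)) ^ q)) =
            (y + δ * ((y ^ (q + 3) - y ^ (2 * q + 2)) + (y ^ (q + 3) - y ^ (2 * q + 2)) ^ q)) := by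
          intro r u v hφr hφu hφv huv hR
          refine ⟨r + θ*u, r + θ*v, ?_, ?_⟩
          · intro h
            exact huv (mul_left_cancel₀ hθ0 (by linear_combination h))
          · rw [fmEq, fmEq]
            have hφx : φ (r + θ*u) = r - θ*u := by
              rw [map_add, map_mul, hθq, hφr, hφu]; ring
            have hφy : φ (r + θ*v) = r - θ*v := by
              rw [map_add, map_mul, hθq, hφr, hφv]; ring
            rw [hφx, hφy, hδθg]
            linear_combination (θ*(u-v)) * hR
        have hE0 : (2*θ^4*γ₂ : F) ≠ 0 :=
          mul_ne_zero (mul_ne_zero h2 (pow_ne_zero 4 hθ0)) hc2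
        obtain ⟨e, hedef⟩ : ∃ a : F, a = (2*θ^4*γ₂)⁻¹ := ⟨_, rfl⟩
        have he : 2*θ^4*γ₂ * e = 1 := by rw [hedef]; exact mul_inv_cancel₀ hE0
        have he0 : e ≠ 0 := by rw [hedef]; exact inv_ne_zero hE0
        have hfixe : φ (2*θ^4*γ₂) = 2*θ^4*γ₂ := by
          rw [map_mul, map_mul, map_ofNat, map_pow, hθq, hφγ₂]; ring
        have hφe : φ e = e := by rw [hedef, map_inv₀, hfixe]
        obtain ⟨ω, hω0, hω2⟩ := hSq (2/θ^2) (div_ne_zero h2 (pow_ne_zero 2 hθ0))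
          (by rw [map_div₀, map_ofNat, hθ2])
        have hw : ω^2*θ^2 = 2 := by
          rw [hω2]; field_simp
        have hφω2 : (φ ω)^2 = ω^2 := by
          rw [← map_pow, hω2, map_div₀, map_ofNat, hθ2]
        have hfac : (φ ω - ω) * (φ ω + ω) = 0 := by linear_combination hφω2
        rcases mul_eq_zero.mp hfac with hsub | hadd
        · -- C1 : ω fixed by φ
          have hφω : φ ω = ω := sub_eq_zero.mp hsub
          obtain ⟨b, hbdef⟩ : ∃ a : F, a = e*s := ⟨_, rfl⟩
          obtain ⟨r, hrdef⟩ : ∃ a : F, a = (e-2)*ω*θ^2*s*s := ⟨_, rfl⟩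
          obtain ⟨u, hudef⟩ : ∃ a : F, a = (1+b)*s := ⟨_, rfl⟩
          obtain ⟨v, hvdef⟩ : ∃ a : F, a = (1-b)*s := ⟨_, rfl⟩
          have hb0 : b ≠ 0 := by rw [hbdef]; exact mul_ne_zero he0 hs0
          have hφb : φ b = b := by rw [hbdef, map_mul, hφe, hφs]
          have hφr : φ r = r := by
            rw [hrdef, map_mul, map_mul, map_mul, map_mul, map_sub, map_ofNat,
              map_pow, hθq, hφe, hφω, hφs]
            ring
          have hφu : φ u = u := by rw [hudef, map_mul, map_add, map_one, hφb, hφs]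
          have hφv : φ v = v := by rw [hvdef, map_mul, map_sub, map_one, hφb, hφs]
          have hsum : u + v = 1 := by
            rw [hudef, hvdef]; linear_combination hs
          have hdiff : u - v = b := by
            rw [hudef, hvdef]; linear_combination b * hs
          have huv : u ≠ v := by
            intro h
            apply hb0
            rw [← hdiff, h, sub_self]
          have hR : 1 + 4*θ^2*γ₂*(u+v)*r^2 - 2*θ^4*γ₂*(u+v)*((u+v)^2+(u-v)^2) = 0 := by
            rw [hsum, hdiff, hbdef, hrdef]
            linear_combination (16*θ^4*γ₂*s^4 - 16*θ^4*γ₂*e*s^4 + 4*θ^4*γ₂*e^2*s^4) * hw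
              + (2*θ^4*γ₂ + 4*θ^4*γ₂*s + 8*θ^4*γ₂*s^2 + 16*θ^4*γ₂*s^3 - 2*θ^4*γ₂*e
                - 4*θ^4*γ₂*e*s - 8*θ^4*γ₂*e*s^2 - 16*θ^4*γ₂*e*s^3 + 2*θ^4*γ₂*e^2*s^2
                + 4*θ^4*γ₂*e^2*s^3) * hs
              + (-1 : F) * he
          exact finisher r u v hφr hφu hφv huv hR
        · -- C2 : φ ω = -ω
          have hφω : φ ω = -ω := eq_neg_of_add_eq_zero_left hadd
          have getz : ∀ K : F, K ≠ 0 → φ K = K →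
              ∃ z : F, z ≠ 0 ∧ z * φ z = K ∧ z + φ z ≠ 0 := by
            intro K hK0 hφK
            obtain ⟨z₀, hz₀0, hz₀K⟩ := hNorm K hK0 hφK
            by_cases hzz : z₀ + φ z₀ = 0
            · obtain ⟨μ, hμ0, hμ1, hμ2⟩ := hmu
              have hφz₀ : φ z₀ = -z₀ := eq_neg_of_add_eq_zero_right hzz
              refine ⟨z₀ * μ, mul_ne_zero hz₀0 hμ0, ?_, ?_⟩
              · rw [map_mul]
                calc z₀ * μ * (φ z₀ * φ μ) = (z₀ * φ z₀) * (μ * φ μ) := by ring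
                  _ = K := by rw [hz₀K, hμ1, mul_one]
              · rw [map_mul, hφz₀]
                intro hcon
                exact (mul_ne_zero hz₀0 (sub_ne_zero.mpr (Ne.symm hμ2)))
                  (by linear_combination hcon)
            · exact ⟨z₀, hz₀0, hz₀K, hzz⟩
          by_cases hE : e = 1
          · -- a = -1, K = -e-1 = -2 ≠ 0
            have hK0 : (-e - 1 : F) ≠ 0 := by
              rw [hE]
              intro hcon
              exact h2 (by linear_combination -hcon)
            have hφK : φ (-e - 1) = -e - 1 := by rw [map_sub, map_neg, map_one, hφe]
            obtain ⟨z, hz0, hzK, hzne⟩ := getz (-e - 1) hK0 hφK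
            obtain ⟨b, hbdef⟩ : ∃ a : F, a = (z + φ z)*s := ⟨_, rfl⟩
            obtain ⟨r, hrdef⟩ : ∃ a : F, a = (z - φ z)*ω*θ^2*s*s := ⟨_, rfl⟩
            obtain ⟨u, hudef⟩ : ∃ a : F, a = (-1+b)*s := ⟨_, rfl⟩
            obtain ⟨v, hvdef⟩ : ∃ a : F, a = (-1-b)*s := ⟨_, rfl⟩
            have hb0 : b ≠ 0 := by rw [hbdef]; exact mul_ne_zero hzne hs0
            have hφb : φ b = b := by
              rw [hbdef, map_mul, map_add, hφφ, hφs]; ring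
            have hφr : φ r = r := by
              rw [hrdef, map_mul, map_mul, map_mul, map_mul, map_sub, map_pow,
                hφφ, hφω, hθq, hφs]
              ring
            have hφu : φ u = u := by
              rw [hudef, map_mul, map_add, map_neg, map_one, hφb, hφs]
            have hφv : φ v = v := by
              rw [hvdef, map_mul, map_sub, map_neg, map_one, hφb, hφs]
            have hsum : u + v = -1 := by
              rw [hudef, hvdef]; linear_combination (-1 : F) * hs
            have hdiff : u - v = b := by
              rw [hudef, hvdef]; linear_combination b * hs
            have huv : u ≠ v := by
              intro h
              apply hb0
              rw [← hdiff, h, sub_self]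
            have hR : 1 + 4*θ^2*γ₂*(u+v)*r^2 - 2*θ^4*γ₂*(u+v)*((u+v)^2+(u-v)^2) = 0 := by
              rw [hsum, hdiff, hbdef, hrdef]
              linear_combination (-4*θ^4*γ₂*s^4*(φ z)^2 + 8*θ^4*γ₂*s^4*z*(φ z)
                  - 4*θ^4*γ₂*s^4*z^2) * hw
                + (2*θ^4*γ₂*z*(φ z) + 4*θ^4*γ₂*s*z*(φ z) - 2*θ^4*γ₂*s^2*(φ z)^2
                  + 4*θ^4*γ₂*s^2*z*(φ z) - 2*θ^4*γ₂*s^2*z^2 - 4*θ^4*γ₂*s^3*(φ z)^2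
                  + 8*θ^4*γ₂*s^3*z*(φ z) - 4*θ^4*γ₂*s^3*z^2) * hs
                + (2*θ^4*γ₂) * hzK + (-1 : F) * he
            exact finisher r u v hφr hφu hφv huv hR
          · -- a = 1, K = e-1 ≠ 0
            have hK0 : (e - 1 : F) ≠ 0 := sub_ne_zero.mpr hE
            have hφK : φ (e - 1) = e - 1 := by rw [map_sub, map_one, hφe]
            obtain ⟨z, hz0, hzK, hzne⟩ := getz (e - 1) hK0 hφK
            obtain ⟨b, hbdef⟩ : ∃ a : F, a = (z + φ z)*s := ⟨_, rfl⟩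
            obtain ⟨r, hrdef⟩ : ∃ a : F, a = (z - φ z)*ω*θ^2*s*s := ⟨_, rfl⟩
            obtain ⟨u, hudef⟩ : ∃ a : F, a = (1+b)*s := ⟨_, rfl⟩
            obtain ⟨v, hvdef⟩ : ∃ a : F, a = (1-b)*s := ⟨_, rfl⟩
            have hb0 : b ≠ 0 := by rw [hbdef]; exact mul_ne_zero hzne hs0
            have hφb : φ b = b := by
              rw [hbdef, map_mul, map_add, hφφ, hφs]; ring
            have hφr : φ r = r := by
              rw [hrdef, map_mul, map_mul, map_mul, map_mul, map_sub, map_pow,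
                hφφ, hφω, hθq, hφs]
              ring
            have hφu : φ u = u := by
              rw [hudef, map_mul, map_add, map_one, hφb, hφs]
            have hφv : φ v = v := by
              rw [hvdef, map_mul, map_sub, map_one, hφb, hφs]
            have hsum : u + v = 1 := by
              rw [hudef, hvdef]; linear_combination hs
            have hdiff : u - v = b := by
              rw [hudef, hvdef]; linear_combination b * hs
            have huv : u ≠ v := by
              intro h
              apply hb0
              rw [← hdiff, h, sub_self]
            have hR : 1 + 4*θ^2*γ₂*(u+v)*r^2 - 2*θ^4*γ₂*(u+v)*((u+v)^2+(u-v)^2) = 0 := by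
              rw [hsum, hdiff, hbdef, hrdef]
              linear_combination (4*θ^4*γ₂*s^4*(φ z)^2 - 8*θ^4*γ₂*s^4*z*(φ z)
                  + 4*θ^4*γ₂*s^4*z^2) * hw
                + (-2*θ^4*γ₂*z*(φ z) - 4*θ^4*γ₂*s*z*(φ z) + 2*θ^4*γ₂*s^2*(φ z)^2
                  - 4*θ^4*γ₂*s^2*z*(φ z) + 2*θ^4*γ₂*s^2*z^2 + 4*θ^4*γ₂*s^3*(φ z)^2
                  - 8*θ^4*γ₂*s^3*z*(φ z) + 4*θ^4*γ₂*s^3*z^2) * hs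
                + (-2*θ^4*γ₂) * hzK + (-1 : F) * he
            exact finisher r u v hφr hφu hφv huv hR
      · -- Case B : γ₁ ≠ 0 and γ₂ ≠ 0
        have hB0 : (θ^2*γ₂^2*γ₁ : F) ≠ 0 :=
          mul_ne_zero (mul_ne_zero (pow_ne_zero 2 hθ0) (pow_ne_zero 2 hc2)) hc1
        obtain ⟨cB, hcBdef⟩ : ∃ a : F, a = (θ^2*γ₂^2*γ₁)⁻¹ := ⟨_, rfl⟩
        have hcB : θ^2*γ₂^2*γ₁ * cB = 1 := by rw [hcBdef]; exact mul_inv_cancel₀ hB0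
        have hfixB : φ (θ^2*γ₂^2*γ₁) = θ^2*γ₂^2*γ₁ := by
          rw [map_mul, map_mul, map_pow, map_pow, hθq, hφγ₁, hφγ₂]; ring
        have hφcB : φ cB = cB := by rw [hcBdef, map_inv₀, hfixB]
        obtain ⟨u, hudef⟩ : ∃ a : F, a = -γ₂*s := ⟨_, rfl⟩
        obtain ⟨r, hrdef⟩ : ∃ a : F, a = -(γ₁+cB)*s := ⟨_, rfl⟩
        have hφu : φ u = u := by rw [hudef, map_mul, map_neg, hφγ₂, hφs]
        have hφr : φ r = r := by
          rw [hrdef, map_mul, map_neg, map_add, hφγ₁, hφcB, hφs]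
        have hφδ' : φ δ = γ₁ - θ*γ₂ := by
          rw [hdec, map_add, map_mul, hθq, hφγ₁, hφγ₂]; ring
        refine ⟨r + θ*u + δ, r + θ*u, ?_, ?_⟩
        · intro h
          exact hδ (by linear_combination h)
        · rw [fmEq, fmEq]
          have hφy : φ (r + θ*u) = r - θ*u := by
            rw [map_add, map_mul, hθq, hφr, hφu]; ring
          have hφx : φ (r + θ*u + δ) = (r - θ*u) + (γ₁ - θ*γ₂) := by
            rw [map_add, hφy, hφδ']
          rw [hφx, hφy, hdec, hrdef, hudef]
          linear_combination (-4*θ^2*γ₁*γ₂^2*s^2*cB^2 - θ^2*γ₁^2*γ₂^2*cB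
              + 6*θ^2*γ₁^2*γ₂^2*s*cB - 12*θ^2*γ₁^2*γ₂^2*s^2*cB - 4*θ^2*γ₁^3*γ₂^2
              + 8*θ^2*γ₁^3*γ₂^2*s - 8*θ^2*γ₁^3*γ₂^2*s^2 - 4*θ^3*γ₂^3*s^2*cB^2
              - θ^3*γ₁*γ₂^3*cB + 6*θ^3*γ₁*γ₂^3*s*cB - 12*θ^3*γ₁*γ₂^3*s^2*cB
              - 4*θ^3*γ₁^2*γ₂^3 + 8*θ^3*γ₁^2*γ₂^3*s - 8*θ^3*γ₁^2*γ₂^3*s^2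
              + 4*θ^4*γ₁*γ₂^4 - 8*θ^4*γ₁*γ₂^4*s + 8*θ^4*γ₁*γ₂^4*s^2
              + 4*θ^5*γ₂^5 - 8*θ^5*γ₂^5*s + 8*θ^5*γ₂^5*s^2) * hs
            + (-γ₁ - θ*γ₂) * hcB
  -- conclude
  have minusIff : ∀ δ : F, (Function.Bijective (fun x : F =>
      x + δ * ((x ^ (q + 3) - x ^ (2 * q + 2)) +
        (x ^ (q + 3) - x ^ (2 * q + 2)) ^ q)) ↔ δ = 0) := by
    intro δ
    constructor
    · intro hbij
      by_contra hδ
      obtain ⟨x, y, hne, heq⟩ := main δ hδ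
      exact hne (hbij.injective heq)
    · rintro rfl
      simpa using Function.bijective_id
  refine ⟨minusIff γ, ?_⟩
  -- plus case via twist
  have hθ3 : θ ^ 3 ≠ 0 := pow_ne_zero 3 hθ0
  obtain ⟨γ', hγ'def⟩ : ∃ g' : F, g' = -γ / θ ^ 3 := ⟨_, rfl⟩
  have tw : ∀ x : F, (x + γ * ((x ^ (q + 3) + x ^ (2 * q + 2)) +
      (x ^ (q + 3) + x ^ (2 * q + 2)) ^ q)) =
      θ⁻¹ * ((θ * x) + γ' * (((θ * x) ^ (q + 3) - (θ * x) ^ (2 * q + 2)) +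
        ((θ * x) ^ (q + 3) - (θ * x) ^ (2 * q + 2)) ^ q)) := by
    intro x
    rw [keyp q φ hφ x (φ x) rfl (hφφ x),
      keym q φ hφ (θ * x) (-θ * φ x) (by rw [map_mul, hθq]; try ring)
        (by rw [map_mul, map_neg, hθq, hφφ]; try ring)]
    rw [hγ'def]
    field_simp
    try ring
  have hfun : (fun x : F => x + γ * ((x ^ (q + 3) + x ^ (2 * q + 2)) +
      (x ^ (q + 3) + x ^ (2 * q + 2)) ^ q)) =
      (fun x : F => θ⁻¹ * ((fun y : F => y + γ' * ((y ^ (q + 3) - y ^ (2 * q + 2)) +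
        (y ^ (q + 3) - y ^ (2 * q + 2)) ^ q)) (θ * x))) := funext tw
  have hplus := (bij_conj θ hθ0 (fun y : F => y + γ' * ((y ^ (q + 3) - y ^ (2 * q + 2)) +
    (y ^ (q + 3) - y ^ (2 * q + 2)) ^ q))).trans (minusIff γ')
  rw [hfun]
  refine hplus.trans ?_
  rw [hγ'def]
  constructor
  · intro h
    rcases div_eq_zero_iff.mp h with h' | h'
    · exact neg_eq_zero.mp h'
    · exact absurd h' hθ3
  · rintro rfl
    simp
end
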